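/- arXiv:2106.00362 — 7 statements merged into one kernel-verified Lean document; each statement's English description precedes it below -/
import Mathlib

section
/- Let 0 < α < 1 and let g : [0,T] → ℝ be continuous on [0,T], continuously differentiable on (0,T], with g' integrable on (0,T). If g attains its maximum over [0,T] at a point t₀ ∈ (0,T], then ∫₀^{t₀} (t₀ - τ)^{-α} g'(τ) dτ ≥ 0. -/
open MeasureTheory Set

/-!
Write `k τ = (t₀ - τ)^(-α)`, a nonnegative kernel increasing on `[0, t₀)`. For `b < t₀`, integrating by
parts on `[0, b]` against `g - g t₀ ≤ 0` gives `∫₀^b k g' ≥ k b (g b - g t₀)`, since both the boundary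
term at `0` and `∫₀^b k' (g - g t₀)` have the right sign. On `[b, t₀]` monotonicity of `k` gives
`k b (g t₀ - g b) = ∫_b^{t₀} k b g' ≤ ∫_b^{t₀} |k g'|`. Hence `∫₀^{t₀} k g' ≥ -2 ∫_b^{t₀} |k g'|`,
which tends to `0` as `b → t₀⁻`.
-/

open Filter Topology Interval intervalIntegral

section KernelIntegral

variable {a b c M : ℝ} {k k' g g' : ℝ → ℝ}

theorem mul_sub_le_integral_mul_deriv_of_le (hab : a ≤ b) (hk : ContinuousOn k (Icc a b))
    (hkd : ∀ x ∈ Ioo a b, HasDerivAt k (k' x) x) (hk'int : IntervalIntegrable k' volume a b)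
    (hk'_nonneg : ∀ x ∈ Ioo a b, 0 ≤ k' x) (hka : 0 ≤ k a) (hg : ContinuousOn g (Icc a b))
    (hgd : ∀ x ∈ Ioo a b, HasDerivAt g (g' x) x) (hg'int : IntervalIntegrable g' volume a b)
    (hle : ∀ x ∈ Icc a b, g x ≤ M) :
    k b * (g b - M) ≤ ∫ x in a..b, k x * g' x := by
  rw [← uIcc_of_le hab] at hk hg
  have hgM : ContinuousOn (fun x => g x - M) [[a, b]] := hg.sub continuousOn_const
  have hibp := integral_mul_deriv_eq_deriv_mul_of_hasDerivAt hk hgM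
    (by simpa [hab] using hkd) (by simpa [hab] using fun x hx => (hgd x hx).sub_const M)
    hk'int hg'int
  have hboundary : 0 ≤ k a * (M - g a) := mul_nonneg hka (sub_nonneg.2 (hle a ⟨le_rfl, hab⟩))
  have hbulk : ∫ x in a..b, k' x * (g x - M) ≤ ∫ x in a..b, (0 : ℝ) :=
    integral_mono_on_of_le_Ioo hab (hk'int.mul_continuousOn hgM) intervalIntegrable_const
      fun x hx => mul_nonpos_of_nonneg_of_nonpos (hk'_nonneg x hx)
        (sub_nonpos.2 (hle x (Ioo_subset_Icc_self hx)))
  rw [intervalIntegral.integral_zero] at hbulk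
  rw [hibp]
  linarith

theorem mul_sub_le_integral_abs_mul_deriv (hbc : b ≤ c) (hk : ∀ x ∈ Ioo b c, k b ≤ k x)
    (hkb : 0 ≤ k b) (hg : ContinuousOn g (Icc b c)) (hgd : ∀ x ∈ Ioo b c, HasDerivAt g (g' x) x)
    (hg'int : IntervalIntegrable g' volume b c)
    (hkg' : IntervalIntegrable (fun x => k x * g' x) volume b c) :
    k b * (g c - g b) ≤ ∫ x in b..c, |k x * g' x| := by
  rw [← integral_eq_sub_of_hasDerivAt_of_le hbc hg hgd hg'int, ← intervalIntegral.integral_const_mul]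
  refine integral_mono_on_of_le_Ioo hbc (hg'int.const_mul _) hkg'.abs fun x hx => ?_
  calc k b * g' x ≤ k b * |g' x| := mul_le_mul_of_nonneg_left (le_abs_self _) hkb
    _ ≤ k x * |g' x| := mul_le_mul_of_nonneg_right (hk x hx) (abs_nonneg _)
    _ = |k x * g' x| := by rw [abs_mul, abs_of_nonneg (hkb.trans (hk x hx))]

theorem tendsto_integral_nhdsLT_zero {f : ℝ → ℝ} (hac : a < c)
    (hf : IntervalIntegrable f volume a c) :
    Tendsto (fun b => ∫ x in b..c, f x) (𝓝[<] c) (𝓝 0) := by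
  have hc : c ∈ [[a, c]] := right_mem_uIcc
  have hcont := (continuousOn_primitive_interval_left
    ((intervalIntegrable_iff' (f := f)).1 hf) c hc).tendsto
  rw [integral_same] at hcont
  rw [← nhdsWithin_Ioo_eq_nhdsLT hac]
  exact hcont.mono_left (nhdsWithin_mono _ (Ioo_subset_Icc_self.trans (uIcc_of_le hac.le).ge))

theorem integral_mul_deriv_nonneg_of_le_right (hac : a < c)
    (hkd : ∀ x ∈ Ico a c, HasDerivAt k (k' x) x) (hk' : ContinuousOn k' (Ico a c))
    (hk'_nonneg : ∀ x ∈ Ioo a c, 0 ≤ k' x) (hka : 0 ≤ k a) (hg : ContinuousOn g (Icc a c))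
    (hgd : ∀ x ∈ Ioo a c, HasDerivAt g (g' x) x) (hg'int : IntervalIntegrable g' volume a c)
    (hkg' : IntervalIntegrable (fun x => k x * g' x) volume a c)
    (hmax : ∀ x ∈ Icc a c, g x ≤ g c) :
    0 ≤ ∫ x in a..c, k x * g' x := by
  have hk_mono : MonotoneOn k (Ico a c) := by
    refine monotoneOn_of_hasDerivWithinAt_nonneg (f' := k') (convex_Ico a c)
      (fun x hx => (hkd x hx).continuousAt.continuousWithinAt) ?_ ?_ <;> rw [interior_Ico]
    · exact fun x hx => (hkd x (Ioo_subset_Ico_self hx)).hasDerivWithinAt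
    · exact hk'_nonneg
  have hlower : ∀ b ∈ Ioo a c, -2 * ∫ x in b..c, |k x * g' x| ≤ ∫ x in a..c, k x * g' x := by
    rintro b ⟨hab, hbc⟩
    have hb : b ∈ [[a, c]] := mem_uIcc_of_le hab.le hbc.le
    have hIcc : Icc a b ⊆ Ico a c := Icc_subset_Ico_right hbc
    have hkb : 0 ≤ k b := hka.trans (hk_mono ⟨le_rfl, hac⟩ ⟨hab.le, hbc⟩ hab.le)
    have hhead := mul_sub_le_integral_mul_deriv_of_le hab.le
      (fun x hx => (hkd x (hIcc hx)).continuousAt.continuousWithinAt)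
      (fun x hx => hkd x (hIcc (Ioo_subset_Icc_self hx)))
      ((hk'.mono hIcc).intervalIntegrable_of_Icc hab.le)
      (fun x hx => hk'_nonneg x ⟨hx.1, hx.2.trans hbc⟩) hka (hg.mono (Icc_subset_Icc_right hbc.le))
      (fun x hx => hgd x ⟨hx.1, hx.2.trans hbc⟩) (hg'int.mono_set (uIcc_subset_uIcc_left hb))
      (fun x hx => hmax x ⟨hx.1, hx.2.trans hbc.le⟩)
    have htail := mul_sub_le_integral_abs_mul_deriv hbc.le
      (fun x hx => hk_mono ⟨hab.le, hbc⟩ ⟨hab.le.trans hx.1.le, hx.2⟩ hx.1.le) hkb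
      (hg.mono (Icc_subset_Icc_left hab.le)) (fun x hx => hgd x ⟨hab.trans hx.1, hx.2⟩)
      (hg'int.mono_set (uIcc_subset_uIcc_right hb)) (hkg'.mono_set (uIcc_subset_uIcc_right hb))
    have hsplit := integral_add_adjacent_intervals (hkg'.mono_set (uIcc_subset_uIcc_left hb))
      (hkg'.mono_set (uIcc_subset_uIcc_right hb))
    have habs := abs_integral_le_integral_abs (f := fun x => k x * g' x) (μ := volume) hbc.le
    linarith [neg_abs_le (∫ x in b..c, k x * g' x)]
  have hlim : Tendsto (fun b => -2 * ∫ x in b..c, |k x * g' x|) (𝓝[<] c) (𝓝 0) := by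
    simpa using (tendsto_integral_nhdsLT_zero hac hkg'.abs).const_mul (-2)
  refine le_of_tendsto hlim ?_
  filter_upwards [Ioo_mem_nhdsLT hac] with b hb using hlower b hb

end KernelIntegral

theorem hasDerivAt_const_sub_rpow {c x : ℝ} (p : ℝ) (hx : x < c) :
    HasDerivAt (fun y => (c - y) ^ p) (-p * (c - x) ^ (p - 1)) x := by
  have hpow := Real.hasDerivAt_rpow_const (p := p) (Or.inl (sub_pos.2 hx).ne')
  exact (hpow.comp x ((hasDerivAt_id x).const_sub c)).congr_deriv (by ring)

theorem luchko_max_principle_general (T α t₀ : ℝ) (hα : 0 < α)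
    (g g' : ℝ → ℝ)
    (hg : ContinuousOn g (Set.Icc 0 T))
    (hderiv : ∀ t ∈ Set.Ioc (0:ℝ) T, HasDerivAt g (g' t) t)
    (hint : IntegrableOn g' (Set.Ioo 0 T))
    (ht₀ : t₀ ∈ Set.Ioc (0:ℝ) T)
    (hmax : ∀ t ∈ Set.Icc (0:ℝ) T, g t ≤ g t₀) :
    0 ≤ ∫ τ in (0:ℝ)..t₀, (t₀ - τ) ^ (-α) * g' τ := by
  obtain ⟨ht₀pos, ht₀T⟩ := ht₀
  by_cases hI : IntervalIntegrable (fun τ => (t₀ - τ) ^ (-α) * g' τ) volume 0 t₀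
  swap
  · rw [intervalIntegral.integral_undef hI]
  have hsub : Icc 0 t₀ ⊆ Icc 0 T := Icc_subset_Icc_right ht₀T
  refine integral_mul_deriv_nonneg_of_le_right ht₀pos
    (fun τ hτ => hasDerivAt_const_sub_rpow (-α) hτ.2) ?_ ?_ (Real.rpow_nonneg (by linarith) _)
    (hg.mono hsub) (fun τ hτ => hderiv τ ⟨hτ.1, hτ.2.le.trans ht₀T⟩) ?_ hI
    (fun τ hτ => hmax τ (hsub hτ))
  · exact continuousOn_const.mul ((continuousOn_const.sub continuousOn_id).rpow_const
      fun τ hτ => Or.inl (sub_ne_zero.2 hτ.2.ne'))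
  · exact fun τ hτ => mul_nonneg (by linarith) (Real.rpow_nonneg (sub_nonneg.2 hτ.2.le) _)
  · exact (intervalIntegrable_iff_integrableOn_Ioo_of_le ht₀pos.le).2
      (hint.mono_set (Ioo_subset_Ioo_right ht₀T))

/-- Luchko's lemma: the Caputo-type integral of the derivative of a function
at a point where it attains its maximum is nonnegative. -/
theorem luchko_max_principle (T α t₀ : ℝ) (hT : 0 < T) (hα : 0 < α) (hα1 : α < 1)
    (g g' : ℝ → ℝ)
    (hg : ContinuousOn g (Set.Icc 0 T))
    (hderiv : ∀ t ∈ Set.Ioc (0:ℝ) T, HasDerivAt g (g' t) t)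
    (hg'cont : ContinuousOn g' (Set.Ioc 0 T))
    (hint : IntegrableOn g' (Set.Ioo 0 T))
    (ht₀ : t₀ ∈ Set.Ioc (0:ℝ) T)
    (hmax : ∀ t ∈ Set.Icc (0:ℝ) T, g t ≤ g t₀) :
    0 ≤ ∫ τ in (0:ℝ)..t₀, (t₀ - τ) ^ (-α) * g' τ :=
  luchko_max_principle_general T α t₀ hα g g' hg hderiv hint ht₀ hmax
end

section
/- Let 0 < α < 1 and let g : [0,T] → ℝ be continuous on [0,T], continuously differentiable on (0,T], with g' ∈ L¹(0,T). Suppose g attains its maximum over [0,T] at t₀ ∈ (0,T] and g is not constant on [0,t₀]. Then ∫₀^{t₀} (t₀ - τ)^{-α} g'(τ) dτ > 0. -/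
/-!
With `h := g t₀ - g ≥ 0` on `[0, t₀]`, integrating by parts on `[0, b]` with `b < t₀` gives
`∫₀ᵇ (t₀ - τ)^(-α) g' = t₀^(-α) h 0 - (t₀ - b)^(-α) h b + ∫₀ᵇ α (t₀ - τ)^(-α-1) h`.
As `b → t₀` the middle term vanishes, since `h b = O(t₀ - b)` and `α < 1`, while the last
integral is nondecreasing in `b`. Its value at any fixed `b` lying beyond a point where `h > 0`
is already strictly positive, which bounds the limit away from zero.
-/

open MeasureTheory Set Filter Topology Asymptotics

section CaputoKernel

variable {α t : ℝ}

lemma hasDerivAt_const_sub_rpow_neg {x : ℝ} (hx : x < t) :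
    HasDerivAt (fun τ => (t - τ) ^ (-α)) (α * (t - x) ^ (-α - 1)) x := by
  convert ((hasDerivAt_id' x).const_sub t).rpow_const (p := -α) (Or.inl (sub_pos.2 hx).ne') using 1
  ring

lemma continuousOn_const_sub_rpow {r : ℝ} {s : Set ℝ} (hs : s ⊆ Iio t) :
    ContinuousOn (fun τ => (t - τ) ^ r) s :=
  (continuousOn_const.sub continuousOn_id).rpow_const fun _ hx => Or.inl (sub_pos.2 (hs hx)).ne'

lemma intervalIntegrable_const_sub_rpow {r : ℝ} (hr : -1 < r) (a b : ℝ) :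
    IntervalIntegrable (fun τ => (t - τ) ^ r) volume a b := by
  simpa using
    (intervalIntegral.intervalIntegrable_rpow' (a := t - a) (b := t - b) hr).comp_sub_left t

lemma intervalIntegrable_const_sub_rpow_neg_mul {f : ℝ → ℝ} {a : ℝ} (hα1 : α < 1) (hat : a < t)
    (hf : IntervalIntegrable f volume a t) (hfc : ContinuousOn f (Ioc a t)) :
    IntervalIntegrable (fun τ => (t - τ) ^ (-α) * f τ) volume a t := by
  obtain ⟨m, ham, hmt⟩ := exists_between hat
  refine IntervalIntegrable.trans (b := m) ?_ ?_
  · refine (hf.mono_set ?_).continuousOn_mul (continuousOn_const_sub_rpow ?_)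
    · rw [uIcc_of_le ham.le, uIcc_of_le hat.le]
      exact Icc_subset_Icc le_rfl hmt.le
    · rw [uIcc_of_le ham.le]
      exact fun x hx => hx.2.trans_lt hmt
  · refine (intervalIntegrable_const_sub_rpow (by linarith) m t).mul_continuousOn (hfc.mono ?_)
    rw [uIcc_of_le hmt.le]
    exact Icc_subset_Ioc_iff hmt.le |>.2 ⟨ham, le_rfl⟩

lemma tendsto_const_sub_rpow_neg_mul_sub {g : ℝ → ℝ} (hα1 : α < 1) (hg : DifferentiableAt ℝ g t) :
    Tendsto (fun b => (t - b) ^ (-α) * (g t - g b)) (𝓝[<] t) (𝓝 0) := by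
  have hO : (fun b => g t - g b) =O[𝓝[<] t] (fun b => t - b) := by
    simpa using (hg.isBigO_sub.mono nhdsWithin_le_nhds).neg_left.neg_right
  have hpow : (fun b => (t - b) ^ (-α) * (t - b)) =ᶠ[𝓝[<] t] (fun b => (t - b) ^ (1 - α)) := by
    filter_upwards [self_mem_nhdsWithin] with b hb
    rw [← Real.rpow_add_one (sub_pos.2 hb).ne']
    ring_nf
  refine ((isBigO_refl _ _).mul hO).trans_tendsto (Tendsto.congr' hpow.symm ?_)
  have hcont : Continuous (fun b => (t - b) ^ (1 - α)) :=
    (Real.continuous_rpow_const (by linarith)).comp (continuous_const.sub continuous_id)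
  simpa [Real.zero_rpow (by linarith : 1 - α ≠ 0)] using
    (hcont.tendsto t).mono_left nhdsWithin_le_nhds

lemma integral_const_sub_rpow_neg_mul_deriv {g g' : ℝ → ℝ} {a b : ℝ} (c : ℝ) (hab : a ≤ b)
    (hbt : b < t) (hg : ContinuousOn g (Icc a b)) (hderiv : ∀ x ∈ Ioo a b, HasDerivAt g (g' x) x)
    (hg' : IntervalIntegrable g' volume a b) :
    ∫ τ in a..b, (t - τ) ^ (-α) * g' τ =
      (t - a) ^ (-α) * (c - g a) - (t - b) ^ (-α) * (c - g b) +
        ∫ τ in a..b, α * (t - τ) ^ (-α - 1) * (c - g τ) := by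
  have hsub : Icc a b ⊆ Iio t := fun x hx => hx.2.trans_lt hbt
  have hibp := intervalIntegral.integral_mul_deriv_eq_deriv_mul_of_hasDerivAt
    (u := fun τ => (t - τ) ^ (-α)) (v := fun τ => g τ - c)
    (u' := fun τ => α * (t - τ) ^ (-α - 1)) (v' := g')
    (by rw [uIcc_of_le hab]; exact continuousOn_const_sub_rpow hsub)
    (by rw [uIcc_of_le hab]; exact hg.sub continuousOn_const)
    (by rw [min_eq_left hab, max_eq_right hab]
        exact fun x hx => hasDerivAt_const_sub_rpow_neg (hsub (Ioo_subset_Icc_self hx)))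
    (by rw [min_eq_left hab, max_eq_right hab]
        exact fun x hx => (hderiv x hx).sub_const c)
    (ContinuousOn.intervalIntegrable (by
      rw [uIcc_of_le hab]
      exact continuousOn_const.mul (continuousOn_const_sub_rpow hsub)))
    hg'
  have hneg : ∫ τ in a..b, α * (t - τ) ^ (-α - 1) * (g τ - c) =
      -∫ τ in a..b, α * (t - τ) ^ (-α - 1) * (c - g τ) := by
    rw [← intervalIntegral.integral_neg]
    congr 1 with τ
    ring
  rw [hibp, hneg]
  ring

lemma mul_const_sub_rpow_mul_sub_nonneg {g : ℝ → ℝ} {τ : ℝ} (hα : 0 ≤ α) (hτ : τ ≤ t)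
    (hgτ : g τ ≤ g t) : 0 ≤ α * (t - τ) ^ (-α - 1) * (g t - g τ) :=
  mul_nonneg (mul_nonneg hα (Real.rpow_nonneg (sub_nonneg.2 hτ) _)) (sub_nonneg.2 hgτ)

lemma le_integral_const_sub_rpow_neg_mul_deriv {g g' : ℝ → ℝ} {a b : ℝ} (hα : 0 ≤ α) (hα1 : α < 1)
    (hab : a ≤ b) (hbt : b < t) (hg : ContinuousOn g (Icc a t))
    (hderiv : ∀ x ∈ Ioc a t, HasDerivAt g (g' x) x) (hg'c : ContinuousOn g' (Ioc a t))
    (hg' : IntervalIntegrable g' volume a t) (hle : ∀ τ ∈ Icc a t, g τ ≤ g t) :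
    (t - a) ^ (-α) * (g t - g a) + ∫ τ in a..b, α * (t - τ) ^ (-α - 1) * (g t - g τ) ≤
      ∫ τ in a..t, (t - τ) ^ (-α) * g' τ := by
  have hat : a < t := hab.trans_lt hbt
  have hprim : Tendsto (fun b' => ∫ τ in a..b', (t - τ) ^ (-α) * g' τ) (𝓝[<] t)
      (𝓝 (∫ τ in a..t, (t - τ) ^ (-α) * g' τ)) := by
    have hcont := intervalIntegral.continuousOn_primitive_interval'
      (intervalIntegrable_const_sub_rpow_neg_mul hα1 hat hg' hg'c) left_mem_uIcc
    rw [uIcc_of_le hat.le] at hcont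
    rw [← nhdsWithin_Ioo_eq_nhdsLT hat]
    exact ((hcont t (right_mem_Icc.2 hat.le)).mono Ioo_subset_Icc_self).tendsto
  set P := ∫ τ in a..b, α * (t - τ) ^ (-α - 1) * (g t - g τ)
  have hlower : Tendsto
      (fun b' => (t - a) ^ (-α) * (g t - g a) - (t - b') ^ (-α) * (g t - g b') + P) (𝓝[<] t)
      (𝓝 ((t - a) ^ (-α) * (g t - g a) + P)) := by
    simpa using (tendsto_const_nhds.sub (tendsto_const_sub_rpow_neg_mul_sub hα1
      (hderiv t ⟨hat, le_rfl⟩).differentiableAt)).add_const P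
  refine le_of_tendsto_of_tendsto hlower hprim ?_
  filter_upwards [Ioo_mem_nhdsLT hbt] with b' hb'
  have hsub : Icc a b' ⊆ Icc a t := Icc_subset_Icc le_rfl hb'.2.le
  rw [integral_const_sub_rpow_neg_mul_deriv (g t) (hab.trans hb'.1.le) hb'.2 (hg.mono hsub)
    (fun x hx => hderiv x ⟨hx.1, hx.2.le.trans hb'.2.le⟩)
    (hg'.mono_set (by rwa [uIcc_of_le (hab.trans hb'.1.le), uIcc_of_le hat.le]))]
  gcongr
  refine intervalIntegral.integral_mono_interval le_rfl hab hb'.1.le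
    (ae_restrict_of_forall_mem measurableSet_Ioc fun τ hτ => ?_) ?_
  · have hτt : τ ≤ t := hτ.2.trans hb'.2.le
    exact mul_const_sub_rpow_mul_sub_nonneg hα hτt (hle τ ⟨hτ.1.le, hτt⟩)
  · refine ContinuousOn.intervalIntegrable ?_
    rw [uIcc_of_le (hab.trans hb'.1.le)]
    exact (continuousOn_const.mul (continuousOn_const_sub_rpow fun x hx =>
      hx.2.trans_lt hb'.2)).mul (continuousOn_const.sub (hg.mono hsub))

end CaputoKernel

theorem luchko_max_principle_strict_general (T α t₀ : ℝ) (hα : 0 < α) (hα1 : α < 1)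
    (g g' : ℝ → ℝ)
    (hg : ContinuousOn g (Set.Icc 0 T))
    (hderiv : ∀ t ∈ Set.Ioc (0:ℝ) T, HasDerivAt g (g' t) t)
    (hg'cont : ContinuousOn g' (Set.Ioc 0 T))
    (hint : IntegrableOn g' (Set.Ioo 0 T))
    (ht₀ : t₀ ∈ Set.Ioc (0:ℝ) T)
    (hmax : ∀ t ∈ Set.Icc (0:ℝ) T, g t ≤ g t₀)
    (hnc : ¬ ∀ s ∈ Set.Icc (0:ℝ) t₀, g s = g t₀) :
    0 < ∫ τ in (0:ℝ)..t₀, (t₀ - τ) ^ (-α) * g' τ := by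
  obtain ⟨ht0, htT⟩ := ht₀
  have hle : ∀ τ ∈ Icc 0 t₀, g τ ≤ g t₀ := fun τ hτ => hmax τ ⟨hτ.1, hτ.2.trans htT⟩
  push Not at hnc
  obtain ⟨s, hs, hgs⟩ := hnc
  replace hgs : g s < g t₀ := (hle s hs).lt_of_ne hgs
  have hst : s < t₀ := hs.2.lt_of_ne (by rintro rfl; exact hgs.false)
  obtain ⟨b, hsb, hbt⟩ := exists_between hst
  have hsub : Icc 0 t₀ ⊆ Icc 0 T := Icc_subset_Icc le_rfl htT
  have hbound := le_integral_const_sub_rpow_neg_mul_deriv hα.le hα1 (hs.1.trans hsb.le) hbt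
    (hg.mono hsub) (fun x hx => hderiv x ⟨hx.1, hx.2.trans htT⟩)
    (hg'cont.mono (Ioc_subset_Ioc le_rfl htT))
    ((intervalIntegrable_iff_integrableOn_Ioo_of_le ht0.le).2
      (hint.mono_set (Ioo_subset_Ioo le_rfl htT)))
    hle
  have hboundary : 0 ≤ (t₀ - 0) ^ (-α) * (g t₀ - g 0) :=
    mul_nonneg (Real.rpow_nonneg (by linarith) _) (sub_nonneg.2 (hle 0 ⟨le_rfl, ht0.le⟩))
  have hbulk : 0 < ∫ τ in (0:ℝ)..b, α * (t₀ - τ) ^ (-α - 1) * (g t₀ - g τ) := by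
    refine intervalIntegral.integral_pos (hs.1.trans_lt hsb) ?_ (fun τ hτ => ?_)
      ⟨s, ⟨hs.1, hsb.le⟩,
        mul_pos (mul_pos hα (Real.rpow_pos_of_pos (sub_pos.2 hst) _)) (sub_pos.2 hgs)⟩
    · exact (continuousOn_const.mul (continuousOn_const_sub_rpow fun x hx =>
        hx.2.trans_lt hbt)).mul
        (continuousOn_const.sub (hg.mono (hsub.trans' (Icc_subset_Icc le_rfl hbt.le))))
    · have hτt : τ ≤ t₀ := hτ.2.trans hbt.le
      exact mul_const_sub_rpow_mul_sub_nonneg hα.le hτt (hle τ ⟨hτ.1.le, hτt⟩)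
  linarith

/-- Strict version of Luchko's maximum-principle lemma: if additionally `g` is not
constant on `[0, t₀]`, the Caputo-type integral is strictly positive. -/
theorem luchko_max_principle_strict (T α t₀ : ℝ) (hT : 0 < T) (hα : 0 < α) (hα1 : α < 1)
    (g g' : ℝ → ℝ)
    (hg : ContinuousOn g (Set.Icc 0 T))
    (hderiv : ∀ t ∈ Set.Ioc (0:ℝ) T, HasDerivAt g (g' t) t)
    (hg'cont : ContinuousOn g' (Set.Ioc 0 T))
    (hint : IntegrableOn g' (Set.Ioo 0 T))
    (ht₀ : t₀ ∈ Set.Ioc (0:ℝ) T)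
    (hmax : ∀ t ∈ Set.Icc (0:ℝ) T, g t ≤ g t₀)
    (hnc : ¬ ∀ s ∈ Set.Icc (0:ℝ) t₀, g s = g t₀) :
    0 < ∫ τ in (0:ℝ)..t₀, (t₀ - τ) ^ (-α) * g' τ :=
  luchko_max_principle_strict_general T α t₀ hα hα1 g g' hg hderiv hg'cont hint ht₀ hmax hnc
end

section
/- Let X be a Banach space, 0 < β < r ≤ 1, and T > 0. Define the weighted Hölder space F^{r,β}((0,T];X) as the set of continuous f : (0,T] → X such that lim_{t→0} t^{1-r} f(t) exists, sup_{0 < s < t ≤ T} s^{1-r+β} ‖f(t)-f(s)‖ / (t-s)^β < ∞, and sup_{0 < s < t'} s^{1-r+β}‖f(t')-f(s)‖/(t'-s)^β → 0 as t' → 0. Then F^{r,β}((0,T];X) is a Banach space with norm ‖f‖ = sup_{0<t≤T} t^{1-r}‖f(t)‖ + sup_{0<s<t≤T} s^{1-r+β}‖f(t)-f(s)‖/(t-s)^β. -/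
/-!
A Cauchy sequence `fₙ` for the `F`-norm is Cauchy pointwise on `(0,T]`, because the weight
`t ^ (1 - r)` is positive there; let `g` be its pointwise limit. Both parts of the norm of
`fₘ - fₙ` are bounded pointwise by `ε` for large `m, n`, and these pointwise bounds survive the
limit `n → ∞`, so `fₘ → g` in the norm. Finally `g` is in `F`: `t ^ (1 - r) • g t` is a uniform
limit on `(0,T]` of the continuous functions `t ^ (1 - r) • fₘ t`, each having a limit at `0`, so it
is continuous and (by completeness of `X`) has a limit at `0`; the Hölder conditions pass to `g`
through `g = fₘ - (fₘ - g)` and the triangle inequality.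
-/

open MeasureTheory Set Filter Topology

/-- The set of weighted Hölder difference quotients of `f` for pairs `0 < s < t ≤ T`. -/
def holderQuotients {X : Type*} [NormedAddCommGroup X] (r β T : ℝ) (f : ℝ → X) : Set ℝ :=
  {c | ∃ s t : ℝ, 0 < s ∧ s < t ∧ t ≤ T ∧
    c = s ^ (1 - r + β) * ‖f t - f s‖ / (t - s) ^ β}

/-- Membership in the weighted Hölder space `F^{r,β}((0,T];X)`. -/
def MemF {X : Type*} [NormedAddCommGroup X] [NormedSpace ℝ X]
    (r β T : ℝ) (f : ℝ → X) : Prop :=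
  ContinuousOn f (Set.Ioc 0 T) ∧
  (∃ l : X, Tendsto (fun t : ℝ => t ^ (1 - r) • f t) (𝓝[>] (0:ℝ)) (𝓝 l)) ∧
  BddAbove (holderQuotients r β T f) ∧
  Tendsto (fun t' : ℝ => sSup (holderQuotients r β t' f)) (𝓝[>] (0:ℝ)) (𝓝 0)

/-- The weighted Hölder norm on `F^{r,β}((0,T];X)`. -/
noncomputable def Fnorm {X : Type*} [NormedAddCommGroup X] (r β T : ℝ) (f : ℝ → X) : ℝ :=
  sSup ((fun t : ℝ => t ^ (1 - r) * ‖f t‖) '' Set.Ioc 0 T) + sSup (holderQuotients r β T f)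

section HolderQuotient

variable {X : Type*} [NormedAddCommGroup X] {r β : ℝ}

noncomputable def holderQuotient (r β : ℝ) (f : ℝ → X) (s t : ℝ) : ℝ :=
  s ^ (1 - r + β) * ‖f t - f s‖ / (t - s) ^ β

lemma holderQuotient_nonneg (f : ℝ → X) {s t : ℝ} (hs : 0 ≤ s) (hst : s ≤ t) :
    0 ≤ holderQuotient r β f s t :=
  div_nonneg (mul_nonneg (Real.rpow_nonneg hs _) (norm_nonneg _))
    (Real.rpow_nonneg (sub_nonneg.2 hst) _)

lemma holderQuotient_sub_le (f g : ℝ → X) {s t : ℝ} (hs : 0 ≤ s) (hst : s ≤ t) :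
    holderQuotient r β (f - g) s t ≤ holderQuotient r β f s t + holderQuotient r β g s t := by
  unfold holderQuotient
  rw [← add_div, ← mul_add]
  have : 0 ≤ (t - s) ^ β := Real.rpow_nonneg (sub_nonneg.2 hst) _
  gcongr
  simpa only [Pi.sub_apply, sub_sub_sub_comm] using norm_sub_le _ _

lemma sSup_holderQuotients_nonneg (T : ℝ) (f : ℝ → X) :
    0 ≤ sSup (holderQuotients r β T f) :=
  Real.sSup_nonneg fun _ ⟨_, _, hs, hst, _, hc⟩ => hc ▸ holderQuotient_nonneg f hs.le hst.le

lemma holderQuotients_mono (r β : ℝ) (f : ℝ → X) : Monotone fun T => holderQuotients r β T f :=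
  fun _ _ hT _ ⟨s, t, hs, hst, ht, hc⟩ => ⟨s, t, hs, hst, ht.trans hT, hc⟩

lemma holderQuotients_le_sSup_add {T ε : ℝ} {g h : ℝ → X}
    (hb : BddAbove (holderQuotients r β T h))
    (hε : ∀ s t, 0 < s → s < t → t ≤ T → holderQuotient r β (h - g) s t ≤ ε) :
    ∀ c ∈ holderQuotients r β T g, c ≤ sSup (holderQuotients r β T h) + ε := by
  rintro c ⟨s, t, hs, hst, htT, rfl⟩
  calc _ = holderQuotient r β (h - (h - g)) s t := by rw [sub_sub_cancel]; rfl
    _ ≤ _ := holderQuotient_sub_le _ _ hs.le hst.le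
    _ ≤ _ := add_le_add (le_csSup hb ⟨s, t, hs, hst, htT, rfl⟩) (hε s t hs hst htT)

lemma sSup_weightedNorms_nonneg (r T : ℝ) (f : ℝ → X) :
    0 ≤ sSup ((fun t : ℝ => t ^ (1 - r) * ‖f t‖) '' Ioc 0 T) :=
  Real.sSup_nonneg fun _ ⟨_, ht, hc⟩ => hc ▸ mul_nonneg (Real.rpow_nonneg ht.1.le _) (norm_nonneg _)

lemma fnorm_nonneg (r β T : ℝ) (f : ℝ → X) : 0 ≤ Fnorm r β T f :=
  add_nonneg (sSup_weightedNorms_nonneg r T f) (sSup_holderQuotients_nonneg T f)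

end HolderQuotient

section Bounds

variable {X : Type*} [NormedAddCommGroup X] {r β T C D : ℝ} {f g : ℝ → X}

-- Unlike `Fnorm r β T f ≤ C`, this does not go through `sSup`, which is junk on unbounded sets.
def FBoundedBy (r β T C : ℝ) (f : ℝ → X) : Prop :=
  (∀ t ∈ Ioc 0 T, t ^ (1 - r) * ‖f t‖ ≤ C) ∧
    ∀ s t, 0 < s → s < t → t ≤ T → holderQuotient r β f s t ≤ C

lemma fBoundedBy_fnorm_of_bddAbove (hw : BddAbove ((fun t : ℝ => t ^ (1 - r) * ‖f t‖) '' Ioc 0 T))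
    (hq : BddAbove (holderQuotients r β T f)) : FBoundedBy r β T (Fnorm r β T f) f :=
  ⟨fun t ht => (le_csSup hw ⟨t, ht, rfl⟩).trans
      (le_add_of_nonneg_right (sSup_holderQuotients_nonneg T f)),
    fun s t hs hst htT => (le_csSup hq ⟨s, t, hs, hst, htT, rfl⟩).trans
      (le_add_of_nonneg_left (sSup_weightedNorms_nonneg r T f))⟩

namespace FBoundedBy

lemma mono (hf : FBoundedBy r β T C f) (hCD : C ≤ D) : FBoundedBy r β T D f :=
  ⟨fun t ht => (hf.1 t ht).trans hCD, fun s t hs hst htT => (hf.2 s t hs hst htT).trans hCD⟩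

lemma sub (hf : FBoundedBy r β T C f) (hg : FBoundedBy r β T D g) :
    FBoundedBy r β T (C + D) (f - g) := by
  refine ⟨fun t ht => ?_, fun s t hs hst htT => ?_⟩
  · calc t ^ (1 - r) * ‖f t - g t‖ ≤ t ^ (1 - r) * ‖f t‖ + t ^ (1 - r) * ‖g t‖ := by
          rw [← mul_add]
          exact mul_le_mul_of_nonneg_left (norm_sub_le _ _) (Real.rpow_nonneg ht.1.le _)
      _ ≤ C + D := add_le_add (hf.1 t ht) (hg.1 t ht)
  · exact (holderQuotient_sub_le f g hs.le hst.le).trans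
      (add_le_add (hf.2 s t hs hst htT) (hg.2 s t hs hst htT))

lemma bddAbove_weightedNorms (hf : FBoundedBy r β T C f) :
    BddAbove ((fun t : ℝ => t ^ (1 - r) * ‖f t‖) '' Ioc 0 T) :=
  ⟨C, fun _ ⟨t, ht, hc⟩ => hc ▸ hf.1 t ht⟩

lemma bddAbove_holderQuotients (hf : FBoundedBy r β T C f) :
    BddAbove (holderQuotients r β T f) :=
  ⟨C, fun _ ⟨s, t, hs, hst, htT, hc⟩ => hc ▸ hf.2 s t hs hst htT⟩

lemma fnorm_le (hf : FBoundedBy r β T C f) (hC : 0 ≤ C) : Fnorm r β T f ≤ C + C :=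
  add_le_add (Real.sSup_le (fun _ ⟨t, ht, hc⟩ => hc ▸ hf.1 t ht) hC)
    (Real.sSup_le (fun _ ⟨s, t, hs, hst, htT, hc⟩ => hc ▸ hf.2 s t hs hst htT) hC)

lemma of_tendsto {ι : Type*} {l : Filter ι} [l.NeBot] {F : ι → ℝ → X}
    (hlim : ∀ t ∈ Ioc 0 T, Tendsto (fun i => F i t) l (𝓝 (f t)))
    (hF : ∀ᶠ i in l, FBoundedBy r β T C (F i)) : FBoundedBy r β T C f := by
  refine ⟨fun t ht => ?_, fun s t hs hst htT => ?_⟩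
  · exact le_of_tendsto (((hlim t ht).norm).const_mul _) (hF.mono fun i hi => hi.1 t ht)
  · have hdiff := (hlim t ⟨hs.trans hst, htT⟩).sub (hlim s ⟨hs, hst.le.trans htT⟩)
    have hlim' : Tendsto (fun i => holderQuotient r β (F i) s t) l
        (𝓝 (holderQuotient r β f s t)) :=
      (hdiff.norm.const_mul _).div_const _
    exact le_of_tendsto hlim' (hF.mono fun i hi => hi.2 s t hs hst htT)

end FBoundedBy

lemma cauchySeq_apply_of_fBoundedBy_sub {f : ℕ → ℝ → X}
    (hf : ∀ ε > 0, ∃ N, ∀ m ≥ N, ∀ n ≥ N, FBoundedBy r β T ε (f m - f n)) {t : ℝ}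
    (ht : t ∈ Ioc 0 T) : CauchySeq fun n => f n t := by
  have htr : 0 < t ^ (1 - r) := Real.rpow_pos_of_pos ht.1 _
  refine Metric.cauchySeq_iff.2 fun ε hε => ?_
  obtain ⟨N, hN⟩ := hf (ε / 2 * t ^ (1 - r)) (by positivity)
  refine ⟨N, fun m hm n hn => ?_⟩
  have hmn : t ^ (1 - r) * ‖f m t - f n t‖ ≤ t ^ (1 - r) * (ε / 2) :=
    mul_comm (ε / 2) _ ▸ (hN m hm n hn).1 t ht
  rw [dist_eq_norm]
  linarith [le_of_mul_le_mul_left hmn htr]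

end Bounds

lemma exists_tendsto_of_forall_approx {α Y : Type*} [PseudoMetricSpace Y] [CompleteSpace Y]
    {l : Filter α} {u : α → Y}
    (h : ∀ ε > 0, ∃ v : α → Y, (∃ y, Tendsto v l (𝓝 y)) ∧ ∀ᶠ x in l, dist (u x) (v x) ≤ ε) :
    ∃ y, Tendsto u l (𝓝 y) := by
  rcases l.eq_or_neBot with rfl | hl
  · obtain ⟨_, ⟨y, -⟩, -⟩ := h 1 one_pos
    exact ⟨y, tendsto_bot⟩
  refine cauchy_map_iff_exists_tendsto.1 (Metric.cauchy_iff.2 ⟨inferInstance, fun ε hε => ?_⟩)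
  obtain ⟨v, ⟨y, hy⟩, hv⟩ := h (ε / 4) (by positivity)
  have hy' : ∀ᶠ x in l, dist (v x) y < ε / 4 := Metric.tendsto_nhds.1 hy _ (by positivity)
  refine ⟨u '' {x | dist (u x) (v x) ≤ ε / 4 ∧ dist (v x) y < ε / 4},
    image_mem_map (hv.and hy'), ?_⟩
  rintro _ ⟨a, ha, rfl⟩ _ ⟨b, hb, rfl⟩
  calc dist (u a) (u b) ≤ dist (u a) (v a) + dist (v a) y + (dist (v b) y + dist (u b) (v b)) := by
        linarith [dist_triangle4 (u a) (v a) y (u b), dist_triangle y (v b) (u b),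
          dist_comm y (v b), dist_comm (v b) (u b)]
    _ < ε := by linarith [ha.1, ha.2, hb.1, hb.2]

section MemF

variable {X : Type*} [NormedAddCommGroup X] [NormedSpace ℝ X] {r β T : ℝ} {f g : ℝ → X}

lemma continuousOn_rpow_smul_iff {s : Set ℝ} (hs : s ⊆ Ioi 0) (a : ℝ) :
    ContinuousOn (fun t => t ^ a • f t) s ↔ ContinuousOn f s := by
  have hpow : ∀ b : ℝ, ContinuousOn (fun t : ℝ => t ^ b) s := fun b =>
    continuousOn_id.rpow_const fun t ht => Or.inl (hs ht).ne'
  refine ⟨fun h => ((hpow (-a)).smul h).congr fun t ht => ?_, fun h => (hpow a).smul h⟩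
  show f t = t ^ (-a) • t ^ a • f t
  rw [smul_smul, ← Real.rpow_add (hs ht), neg_add_cancel, Real.rpow_zero, one_smul]

lemma dist_rpow_smul {t : ℝ} (ht : 0 ≤ t) (a : ℝ) (x y : X) :
    dist (t ^ a • x) (t ^ a • y) = t ^ a * ‖x - y‖ := by
  rw [dist_smul₀, Real.norm_of_nonneg (Real.rpow_nonneg ht a), dist_eq_norm]

lemma MemF.bddAbove_weightedNorms (hf : MemF r β T f) :
    BddAbove ((fun t : ℝ => t ^ (1 - r) * ‖f t‖) '' Ioc 0 T) := by
  obtain ⟨l, hl⟩ := hf.2.1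
  obtain ⟨δ, hδ, hδl⟩ := mem_nhdsGT_iff_exists_Ioo_subset.1
    (hl.norm.eventually (gt_mem_nhds (lt_add_one ‖l‖)))
  have hcont : ContinuousOn (fun t : ℝ => t ^ (1 - r) * ‖f t‖) (Icc δ T) :=
    (continuousOn_id.rpow_const fun t ht => Or.inl (hδ.trans_le ht.1).ne').mul
      (hf.1.mono fun t ht => ⟨hδ.trans_le ht.1, ht.2⟩).norm
  obtain ⟨M, hM⟩ := isCompact_Icc.bddAbove_image hcont
  refine ⟨max (‖l‖ + 1) M, ?_⟩
  rintro _ ⟨t, ht, rfl⟩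
  rcases lt_or_ge t δ with htδ | hδt
  · have hlt : ‖t ^ (1 - r) • f t‖ < ‖l‖ + 1 := hδl ⟨ht.1, htδ⟩
    rw [norm_smul_of_nonneg (Real.rpow_nonneg ht.1.le _)] at hlt
    exact le_max_of_le_left hlt.le
  · exact le_max_of_le_right (hM ⟨t, ⟨hδt, ht.2⟩, rfl⟩)

lemma MemF.fBoundedBy_fnorm (hf : MemF r β T f) : FBoundedBy r β T (Fnorm r β T f) f :=
  fBoundedBy_fnorm_of_bddAbove hf.bddAbove_weightedNorms hf.2.2.1

lemma MemF.fBoundedBy_fnorm_sub (hf : MemF r β T f) (hg : MemF r β T g) :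
    FBoundedBy r β T (Fnorm r β T (f - g)) (f - g) :=
  have hfg := hf.fBoundedBy_fnorm.sub hg.fBoundedBy_fnorm
  fBoundedBy_fnorm_of_bddAbove hfg.bddAbove_weightedNorms hfg.bddAbove_holderQuotients

lemma MemF.of_approx [CompleteSpace X] (hT : 0 < T)
    (hg : ∀ ε > 0, ∃ h, MemF r β T h ∧ FBoundedBy r β T ε (h - g)) : MemF r β T g := by
  have hw : ∀ ε > 0, ∃ h, MemF r β T h ∧
      ∀ t ∈ Ioc 0 T, dist (t ^ (1 - r) • g t) (t ^ (1 - r) • h t) ≤ ε := fun ε hε =>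
    (hg ε hε).imp fun h ⟨hh, hgh⟩ =>
      ⟨hh, fun t ht => by rw [dist_rpow_smul ht.1.le, norm_sub_rev]; exact hgh.1 t ht⟩
  have hIoc : Ioc 0 T ⊆ Ioi 0 := fun t ht => ht.1
  refine ⟨?_, ?_, ?_, ?_⟩
  · refine (continuousOn_rpow_smul_iff hIoc (1 - r)).1
      (continuousOn_of_uniform_approx_of_continuousOn fun u hu => ?_)
    obtain ⟨ε, hε, hεu⟩ := Metric.mem_uniformity_dist.1 hu
    obtain ⟨h, hh, hgh⟩ := hw (ε / 2) (half_pos hε)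
    exact ⟨_, (continuousOn_rpow_smul_iff hIoc (1 - r)).2 hh.1,
      fun t ht => hεu ((hgh t ht).trans_lt (half_lt_self hε))⟩
  · refine exists_tendsto_of_forall_approx fun ε hε => ?_
    obtain ⟨h, hh, hgh⟩ := hw ε hε
    exact ⟨_, hh.2.1, mem_of_superset (Ioo_mem_nhdsGT hT) fun t ht => hgh t ⟨ht.1, ht.2.le⟩⟩
  · obtain ⟨h, hh, hgh⟩ := hg 1 one_pos
    exact ⟨_, holderQuotients_le_sSup_add hh.2.2.1 hgh.2⟩
  · refine Metric.tendsto_nhds.2 fun ε hε => ?_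
    obtain ⟨h, hh, hgh⟩ := hg (ε / 2) (half_pos hε)
    filter_upwards [Ioo_mem_nhdsGT hT, hh.2.2.2.eventually (gt_mem_nhds (half_pos hε))]
      with t' ht' hsmall
    have hle : sSup (holderQuotients r β t' g) ≤ sSup (holderQuotients r β t' h) + ε / 2 :=
      Real.sSup_le (holderQuotients_le_sSup_add
          (hh.2.2.1.mono (holderQuotients_mono r β h ht'.2.le))
          fun s t hs hst htt' => hgh.2 s t hs hst (htt'.trans ht'.2.le))
        (add_nonneg (sSup_holderQuotients_nonneg t' h) (half_pos hε).le)
    rw [Real.dist_0_eq_abs, abs_of_nonneg (sSup_holderQuotients_nonneg t' g)]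
    linarith

end MemF

theorem F_space_complete_general {X : Type*} [NormedAddCommGroup X] [NormedSpace ℝ X] [CompleteSpace X]
    (r β T : ℝ) (hT : 0 < T)
    (f : ℕ → ℝ → X) (hf : ∀ n, MemF r β T (f n))
    (hcauchy : ∀ ε > (0:ℝ), ∃ N : ℕ, ∀ m ≥ N, ∀ n ≥ N,
      Fnorm r β T (f m - f n) < ε) :
    ∃ g : ℝ → X, MemF r β T g ∧
      Tendsto (fun n => Fnorm r β T (f n - g)) atTop (𝓝 0) := by
  have hcauchy' : ∀ ε > 0, ∃ N, ∀ m ≥ N, ∀ n ≥ N, FBoundedBy r β T ε (f m - f n) :=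
    fun ε hε => (hcauchy ε hε).imp fun N hN m hm n hn =>
      ((hf m).fBoundedBy_fnorm_sub (hf n)).mono (hN m hm n hn).le
  set g : ℝ → X := fun t => limUnder atTop fun n => f n t
  have hlim : ∀ t ∈ Ioc 0 T, Tendsto (fun n => f n t) atTop (𝓝 (g t)) := fun t ht =>
    (cauchySeq_apply_of_fBoundedBy_sub hcauchy' ht).tendsto_limUnder
  have happrox : ∀ ε > 0, ∃ N, ∀ m ≥ N, FBoundedBy r β T ε (f m - g) := fun ε hε =>
    (hcauchy' ε hε).imp fun N hN m hm =>
      FBoundedBy.of_tendsto (fun t ht => tendsto_const_nhds.sub (hlim t ht))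
        ((eventually_ge_atTop N).mono fun n hn => hN m hm n hn)
  refine ⟨g, MemF.of_approx hT fun ε hε => ?_, Metric.tendsto_atTop.2 fun ε hε => ?_⟩
  · obtain ⟨N, hN⟩ := happrox ε hε
    exact ⟨f N, hf N, hN N le_rfl⟩
  · obtain ⟨N, hN⟩ := happrox (ε / 3) (by positivity)
    refine ⟨N, fun m hm => ?_⟩
    rw [Real.dist_0_eq_abs, abs_of_nonneg (fnorm_nonneg r β T _)]
    linarith [(hN m hm).fnorm_le (by positivity)]

/-- `F^{r,β}((0,T];X)` is a Banach space with the weighted Hölder norm: every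
Cauchy sequence (for that norm) of elements of the space converges, in that norm,
to an element of the space. -/
theorem F_space_complete {X : Type*} [NormedAddCommGroup X] [NormedSpace ℝ X] [CompleteSpace X]
    (r β T : ℝ) (hβ : 0 < β) (hβr : β < r) (hr : r ≤ 1) (hT : 0 < T)
    (f : ℕ → ℝ → X) (hf : ∀ n, MemF r β T (f n))
    (hcauchy : ∀ ε > (0:ℝ), ∃ N : ℕ, ∀ m ≥ N, ∀ n ≥ N,
      Fnorm r β T (f m - f n) < ε) :
    ∃ g : ℝ → X, MemF r β T g ∧
      Tendsto (fun n => Fnorm r β T (f n - g)) atTop (𝓝 0) :=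
  F_space_complete_general r β T hT f hf hcauchy
end

section
/- Let X be a Banach space, T > 0, 0 < β < r < 1, and 0 < σ ≤ 1. If g ∈ C^σ([0,T];X) with g(0) = 0, and f(t) := t^{r-1} g(t) for t ∈ (0,T], then f ∈ F^{r,σ}((0,T];X) whenever σ < r, in particular f satisfies lim_{t→0} t^{1-r} f(t) = 0 and sup_{0<s<t≤T} s^{1-r+σ}‖f(t)-f(s)‖/(t-s)^σ < ∞. -/
open MeasureTheory Set Filter Topology
/-!
Write `f t = t^(r-1) • g t` and split
`f t - f s = t^(r-1) • (g t - g s) + (t^(r-1) - s^(r-1)) • g s`.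
The first term is at most `C s^(r-1) (t-s)^σ` because `t^(r-1) ≤ s^(r-1)`; for the second,
`‖g s‖ ≤ C s^σ` (as `g 0 = 0`) and `s^(r-1) - t^(r-1) ≤ s^(r-1-σ) (t-s)^σ`, which after scaling
by `s` is `1 - x^(r-1) ≤ min 1 (x-1) ≤ (x-1)^σ` for `x ≥ 1`. Hence every weighted quotient with
`s < t ≤ T'` is at most `2 C s^σ ≤ 2 C T'^σ`, which is bounded and tends to `0` with `T'`.
-/

namespace Real

lemma one_sub_rpow_le_rpow_sub_one {a σ x : ℝ} (ha : -1 ≤ a) (hσ0 : 0 ≤ σ) (hσ1 : σ ≤ 1)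
    (hx : 1 ≤ x) : 1 - x ^ a ≤ (x - 1) ^ σ := by
  rcases le_total (x - 1) 1 with hx' | hx'
  · calc 1 - x ^ a ≤ 1 - x ^ (-1 : ℝ) := by gcongr
      _ = (x - 1) / x := by rw [rpow_neg_one]; field_simp
      _ ≤ x - 1 := div_le_self (by linarith) hx
      _ = (x - 1) ^ (1 : ℝ) := (rpow_one _).symm
      _ ≤ (x - 1) ^ σ := rpow_le_rpow_of_exponent_ge' (by linarith) hx' hσ0 hσ1
  · calc 1 - x ^ a ≤ 1 := by linarith [rpow_nonneg (zero_le_one.trans hx) a]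
      _ ≤ (x - 1) ^ σ := one_le_rpow hx' hσ0

lemma rpow_sub_rpow_le_rpow_mul_rpow_sub {a σ s t : ℝ} (ha : -1 ≤ a) (hσ0 : 0 ≤ σ)
    (hσ1 : σ ≤ 1) (hs : 0 < s) (hst : s ≤ t) :
    s ^ a - t ^ a ≤ s ^ (a - σ) * (t - s) ^ σ := by
  obtain ⟨x, hx, rfl⟩ : ∃ x, 1 ≤ x ∧ t = s * x :=
    ⟨t / s, (one_le_div hs).2 hst, (mul_div_cancel₀ t hs.ne').symm⟩
  have hx0 : 0 ≤ x - 1 := by linarith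
  calc s ^ a - (s * x) ^ a = s ^ a * (1 - x ^ a) := by
        rw [mul_rpow hs.le (by linarith)]; ring
    _ ≤ s ^ a * (x - 1) ^ σ := by
        gcongr
        exact one_sub_rpow_le_rpow_sub_one ha hσ0 hσ1 hx
    _ = s ^ (a - σ) * (s * x - s) ^ σ := by
        rw [show s * x - s = s * (x - 1) by ring, mul_rpow hs.le hx0, rpow_sub hs]
        field_simp

end Real

section WeightedQuotient

variable {X : Type*} [NormedAddCommGroup X] [NormedSpace ℝ X]
  {r σ C s t : ℝ} {g : ℝ → X}

lemma norm_rpow_smul_sub_rpow_smul_le (hr0 : 0 ≤ r) (hr1 : r ≤ 1) (hσ0 : 0 ≤ σ) (hσ1 : σ ≤ 1)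
    (hs : 0 < s) (hst : s ≤ t) (hgts : ‖g t - g s‖ ≤ C * (t - s) ^ σ)
    (hgs : ‖g s‖ ≤ C * s ^ σ) :
    ‖t ^ (r - 1) • g t - s ^ (r - 1) • g s‖ ≤ 2 * C * s ^ (r - 1) * (t - s) ^ σ := by
  have ht : 0 < t := hs.trans_le hst
  have hts : 0 ≤ t - s := by linarith
  have hpow_anti : t ^ (r - 1) ≤ s ^ (r - 1) := Real.rpow_le_rpow_of_nonpos hs hst (by linarith)
  have hpow_diff : s ^ (r - 1) - t ^ (r - 1) ≤ s ^ (r - 1 - σ) * (t - s) ^ σ :=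
    Real.rpow_sub_rpow_le_rpow_mul_rpow_sub (by linarith) hσ0 hσ1 hs hst
  have hsplit : t ^ (r - 1) • g t - s ^ (r - 1) • g s
      = t ^ (r - 1) • (g t - g s) - (s ^ (r - 1) - t ^ (r - 1)) • g s := by
    rw [smul_sub, sub_smul]; abel
  have hfirst : ‖t ^ (r - 1) • (g t - g s)‖ ≤ s ^ (r - 1) * (C * (t - s) ^ σ) := by
    rw [norm_smul, Real.norm_of_nonneg (by positivity)]
    exact mul_le_mul hpow_anti hgts (norm_nonneg _) (by positivity)
  have hsecond : ‖(s ^ (r - 1) - t ^ (r - 1)) • g s‖ ≤ s ^ (r - 1) * (C * (t - s) ^ σ) := by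
    rw [norm_smul, Real.norm_of_nonneg (by linarith)]
    calc (s ^ (r - 1) - t ^ (r - 1)) * ‖g s‖
        ≤ s ^ (r - 1 - σ) * (t - s) ^ σ * (C * s ^ σ) :=
          mul_le_mul hpow_diff hgs (norm_nonneg _) (by positivity)
      _ = s ^ (r - 1) * (C * (t - s) ^ σ) := by
          rw [Real.rpow_sub hs]; field_simp
  calc ‖t ^ (r - 1) • g t - s ^ (r - 1) • g s‖
      ≤ ‖t ^ (r - 1) • (g t - g s)‖ + ‖(s ^ (r - 1) - t ^ (r - 1)) • g s‖ := by
        rw [hsplit]; exact norm_sub_le _ _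
    _ ≤ 2 * C * s ^ (r - 1) * (t - s) ^ σ := by linarith

lemma weighted_quotient_rpow_smul_le (hr0 : 0 ≤ r) (hr1 : r ≤ 1) (hσ0 : 0 ≤ σ) (hσ1 : σ ≤ 1)
    (hs : 0 < s) (hst : s < t) (hgts : ‖g t - g s‖ ≤ C * (t - s) ^ σ)
    (hgs : ‖g s‖ ≤ C * s ^ σ) :
    s ^ (1 - r + σ) * ‖t ^ (r - 1) • g t - s ^ (r - 1) • g s‖ / (t - s) ^ σ ≤ 2 * C * s ^ σ := by
  have hts : 0 < (t - s) ^ σ := Real.rpow_pos_of_pos (by linarith) σ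
  rw [div_le_iff₀ hts]
  calc s ^ (1 - r + σ) * ‖t ^ (r - 1) • g t - s ^ (r - 1) • g s‖
      ≤ s ^ (1 - r + σ) * (2 * C * s ^ (r - 1) * (t - s) ^ σ) := by
        gcongr
        exact norm_rpow_smul_sub_rpow_smul_le hr0 hr1 hσ0 hσ1 hs hst.le hgts hgs
    _ = 2 * C * (s ^ (1 - r + σ) * s ^ (r - 1)) * (t - s) ^ σ := by ring
    _ = 2 * C * s ^ σ * (t - s) ^ σ := by rw [← Real.rpow_add hs]; ring_nf

end WeightedQuotient

lemma holderQuotients_nonneg {X : Type*} [NormedAddCommGroup X] {r β T c : ℝ} {f : ℝ → X}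
    (hc : c ∈ holderQuotients r β T f) : 0 ≤ c := by
  obtain ⟨s, t, hs, hst, -, rfl⟩ := hc
  have : 0 ≤ t - s := by linarith
  positivity

lemma holderQuotients_rpow_smul_le {X : Type*} [NormedAddCommGroup X] [NormedSpace ℝ X]
    {r σ T T' C c : ℝ} {g : ℝ → X} (hr0 : 0 ≤ r) (hr1 : r ≤ 1) (hσ0 : 0 ≤ σ) (hσ1 : σ ≤ 1)
    (hg0 : g 0 = 0)
    (hholder : ∀ s ∈ Icc (0:ℝ) T, ∀ t ∈ Icc (0:ℝ) T, ‖g t - g s‖ ≤ C * |t - s| ^ σ)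
    (hT' : T' ≤ T) (hc : c ∈ holderQuotients r σ T' (fun t : ℝ => t ^ (r - 1) • g t)) :
    c ≤ 2 * C * T' ^ σ := by
  obtain ⟨s, t, hs, hst, htT', rfl⟩ := hc
  have hsI : s ∈ Icc (0:ℝ) T := ⟨hs.le, by linarith⟩
  have hgts : ‖g t - g s‖ ≤ C * (t - s) ^ σ := by
    simpa [abs_of_pos (sub_pos.2 hst)] using hholder s hsI t ⟨by linarith, by linarith⟩
  have hgs : ‖g s‖ ≤ C * s ^ σ := by
    simpa [hg0, abs_of_pos hs] using hholder 0 ⟨le_rfl, by linarith⟩ s hsI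
  have hC : 0 ≤ C := nonneg_of_mul_nonneg_left ((norm_nonneg _).trans hgs)
    (Real.rpow_pos_of_pos hs σ)
  calc _ ≤ 2 * C * s ^ σ := weighted_quotient_rpow_smul_le hr0 hr1 hσ0 hσ1 hs hst hgts hgs
    _ ≤ 2 * C * T' ^ σ := by gcongr; linarith

lemma tendsto_const_mul_rpow_nhds_zero (C : ℝ) {σ : ℝ} (hσ : 0 < σ) :
    Tendsto (fun t : ℝ => C * t ^ σ) (𝓝 0) (𝓝 0) := by
  simpa [Real.zero_rpow hσ.ne'] using ((Real.continuous_rpow_const hσ.le).tendsto 0).const_mul C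

lemma continuousOn_of_norm_sub_le_mul_abs_rpow {X : Type*} [NormedAddCommGroup X]
    {S : Set ℝ} {C σ : ℝ} {g : ℝ → X} (hσ : 0 < σ)
    (hholder : ∀ s ∈ S, ∀ t ∈ S, ‖g t - g s‖ ≤ C * |t - s| ^ σ) : ContinuousOn g S := by
  intro x hx
  have hdist : Tendsto (fun t : ℝ => |t - x|) (𝓝[S] x) (𝓝 0) := by
    simpa using ((continuous_sub_right x).abs.tendsto x).mono_left nhdsWithin_le_nhds
  refine tendsto_iff_norm_sub_tendsto_zero.2 <|
    squeeze_zero_norm' ?_ ((tendsto_const_mul_rpow_nhds_zero C hσ).comp hdist)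
  filter_upwards [self_mem_nhdsWithin] with t ht
  simpa using hholder x hx t ht

theorem holder_weighted_mem_general {X : Type*} [NormedAddCommGroup X] [NormedSpace ℝ X]
    (r σ T C : ℝ) (hr0 : 0 < r) (hr1 : r < 1) (hσ0 : 0 < σ) (hσ1 : σ ≤ 1)
    (hT : 0 < T)
    (g : ℝ → X) (hg0 : g 0 = 0)
    (hholder : ∀ s ∈ Set.Icc (0:ℝ) T, ∀ t ∈ Set.Icc (0:ℝ) T,
      ‖g t - g s‖ ≤ C * |t - s| ^ σ) :
    MemF r σ T (fun t : ℝ => t ^ (r - 1) • g t) ∧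
    Tendsto (fun t : ℝ => t ^ (1 - r) • (t ^ (r - 1) • g t)) (𝓝[>] (0:ℝ)) (𝓝 0) ∧
    BddAbove (holderQuotients r σ T (fun t : ℝ => t ^ (r - 1) • g t)) := by
  have hgc : ContinuousOn g (Icc 0 T) := continuousOn_of_norm_sub_le_mul_abs_rpow hσ0 hholder
  have hC : 0 ≤ C := nonneg_of_mul_nonneg_left ((norm_nonneg _).trans
    (hholder 0 ⟨le_rfl, hT.le⟩ T ⟨hT.le, le_rfl⟩)) (by positivity)
  have hquot {T'} (hT' : T' ≤ T) {c} (hc : c ∈ holderQuotients r σ T' _) :=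
    holderQuotients_rpow_smul_le hr0.le hr1.le hσ0.le hσ1 hg0 hholder hT' hc
  have hlim : Tendsto (fun t : ℝ => t ^ (1 - r) • (t ^ (r - 1) • g t)) (𝓝[>] 0) (𝓝 0) := by
    have hg : Tendsto g (𝓝[>] 0) (𝓝 0) :=
      hg0 ▸ (hgc 0 ⟨le_rfl, hT.le⟩).mono_of_mem_nhdsWithin (Icc_mem_nhdsGT hT)
    refine hg.congr' ?_
    filter_upwards [self_mem_nhdsWithin] with t (ht : 0 < t)
    rw [smul_smul, ← Real.rpow_add ht, sub_add_sub_cancel', sub_self, Real.rpow_zero, one_smul]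
  have hbdd : BddAbove (holderQuotients r σ T (fun t : ℝ => t ^ (r - 1) • g t)) :=
    ⟨2 * C * T ^ σ, fun _ => hquot le_rfl⟩
  have hsup : Tendsto (fun T' => sSup (holderQuotients r σ T' (fun t : ℝ => t ^ (r - 1) • g t)))
      (𝓝[>] 0) (𝓝 0) := by
    refine squeeze_zero' (.of_forall fun _ => Real.sSup_nonneg fun _ => holderQuotients_nonneg)
      ?_ ((tendsto_const_mul_rpow_nhds_zero (2 * C) hσ0).mono_left nhdsWithin_le_nhds)
    filter_upwards [Icc_mem_nhdsGT hT] with T' hT'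
    exact Real.sSup_le (fun _ => hquot hT'.2) (by have := hT'.1; positivity)
  have hfc : ContinuousOn (fun t : ℝ => t ^ (r - 1) • g t) (Ioc 0 T) :=
    .smul (fun x hx => (Real.continuousAt_rpow_const x _ (.inl hx.1.ne')).continuousWithinAt)
      (hgc.mono Ioc_subset_Icc_self)
  exact ⟨⟨hfc, ⟨0, hlim⟩, hbdd, hsup⟩, hlim, hbdd⟩

/-- If `g` is σ-Hölder on `[0,T]` with `g 0 = 0` and `σ < r`, then
`f t = t^(r-1) • g t` belongs to `F^{r,σ}((0,T];X)`; in particular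
`t^(1-r) • f t → 0` as `t → 0` and the weighted Hölder seminorm is finite. -/
theorem holder_weighted_mem {X : Type*} [NormedAddCommGroup X] [NormedSpace ℝ X]
    (r σ T C : ℝ) (hr0 : 0 < r) (hr1 : r < 1) (hσ0 : 0 < σ) (hσ1 : σ ≤ 1)
    (hσr : σ < r) (hT : 0 < T)
    (g : ℝ → X) (hg0 : g 0 = 0)
    (hholder : ∀ s ∈ Set.Icc (0:ℝ) T, ∀ t ∈ Set.Icc (0:ℝ) T,
      ‖g t - g s‖ ≤ C * |t - s| ^ σ) :
    MemF r σ T (fun t : ℝ => t ^ (r - 1) • g t) ∧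
    Tendsto (fun t : ℝ => t ^ (1 - r) • (t ^ (r - 1) • g t)) (𝓝[>] (0:ℝ)) (𝓝 0) ∧
    BddAbove (holderQuotients r σ T (fun t : ℝ => t ^ (r - 1) • g t)) :=
  holder_weighted_mem_general r σ T C hr0 hr1 hσ0 hσ1 hT g hg0 hholder
end

section
/- For 0 < σ < α < 1 and T > 0, the function f(τ) = τ^{α-1} belongs to F^{α-σ,σ}((0,T];ℝ); that is, lim_{t→0} t^{1-(α-σ)} t^{α-1} = lim_{t→0} t^σ = 0 exists, and sup_{0<s<t≤T} s^{1-(α-σ)+σ} |t^{α-1} - s^{α-1}| / (t-s)^σ < ∞, with this supremum over pairs s<t<t' tending to 0 as t' → 0. -/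
/-!
For `0 < s < t` write `D = s^(α-1) - t^(α-1) ≥ 0`. Trivially `D ≤ s^(α-1)`, and since
`t^(α-1) = t^α / t ≥ s^α / t` also `D ≤ s^(α-1) (t - s) / s`. Hence
`D ≤ s^(α-1) min(1, (t-s)/s) ≤ s^(α-1) ((t-s)/s)^σ`, so every weighted Hölder quotient taken at
`s` is at most `s^σ`. The quotients over `0 < s < t ≤ t'` are therefore bounded by `t'^σ → 0`.
-/

open MeasureTheory Set Filter Topology
lemma Real.min_one_le_rpow {x σ : ℝ} (hx : 0 ≤ x) (hσ0 : 0 ≤ σ) (hσ1 : σ ≤ 1) :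
    min 1 x ≤ x ^ σ := by
  rcases le_total x 1 with hx1 | hx1
  · exact (min_le_right _ _).trans (Real.self_le_rpow_of_le_one hx hx1 hσ1)
  · exact (min_le_left _ _).trans (Real.one_le_rpow hx1 hσ0)

lemma Real.rpow_sub_one_sub_rpow_sub_one_le {a s t : ℝ} (ha : 0 ≤ a) (hs : 0 < s) (hst : s ≤ t) :
    s ^ (a - 1) - t ^ (a - 1) ≤ s ^ (a - 1) * min 1 ((t - s) / s) := by
  have ht : 0 < t := hs.trans_le hst
  rcases min_cases (1 : ℝ) ((t - s) / s) with ⟨hmin, -⟩ | ⟨hmin, -⟩ <;> rw [hmin]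
  · have : 0 ≤ t ^ (a - 1) := by positivity
    linarith
  · have hta : s ^ a / t ≤ t ^ (a - 1) := by
      rw [Real.rpow_sub_one ht.ne']
      gcongr
    have hsa : s ^ (a - 1) * ((t - s) / t) = s ^ a / s - s ^ a / t := by
      rw [Real.rpow_sub_one hs.ne']
      field_simp
    calc s ^ (a - 1) - t ^ (a - 1) ≤ s ^ (a - 1) * ((t - s) / t) := by
          rw [hsa, ← Real.rpow_sub_one hs.ne']
          linarith
      _ ≤ s ^ (a - 1) * ((t - s) / s) := by gcongr

section

variable {α σ : ℝ}

lemma holderQuotient_rpow_le (hσ0 : 0 ≤ σ) (hσ1 : σ ≤ 1) (hα0 : 0 ≤ α) (hα1 : α ≤ 1)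
    {s t : ℝ} (hs : 0 < s) (hst : s < t) :
    s ^ (1 - (α - σ) + σ) * ‖t ^ (α - 1) - s ^ (α - 1)‖ / (t - s) ^ σ ≤ s ^ σ := by
  have hts : 0 < t - s := by linarith
  have hnorm : ‖t ^ (α - 1) - s ^ (α - 1)‖ = s ^ (α - 1) - t ^ (α - 1) := by
    rw [Real.norm_eq_abs, abs_sub_comm, abs_of_nonneg]
    exact sub_nonneg.2 (Real.rpow_le_rpow_of_nonpos hs hst.le (by linarith))
  have hdiff : s ^ (α - 1) - t ^ (α - 1) ≤ s ^ (α - 1) * ((t - s) ^ σ / s ^ σ) := by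
    rw [← Real.div_rpow hts.le hs.le]
    exact (Real.rpow_sub_one_sub_rpow_sub_one_le hα0 hs hst.le).trans
      (by gcongr; exact Real.min_one_le_rpow (by positivity) hσ0 hσ1)
  have hpow : s ^ (1 - (α - σ) + σ) * s ^ (α - 1) / s ^ σ = s ^ σ := by
    rw [← Real.rpow_add hs, ← Real.rpow_sub hs]
    ring_nf
  rw [hnorm, div_le_iff₀ (by positivity)]
  calc s ^ (1 - (α - σ) + σ) * (s ^ (α - 1) - t ^ (α - 1))
      ≤ s ^ (1 - (α - σ) + σ) * (s ^ (α - 1) * ((t - s) ^ σ / s ^ σ)) := by gcongr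
    _ = s ^ (1 - (α - σ) + σ) * s ^ (α - 1) / s ^ σ * (t - s) ^ σ := by ring
    _ = s ^ σ * (t - s) ^ σ := by rw [hpow]

lemma le_rpow_of_mem_holderQuotients_rpow (hσ0 : 0 ≤ σ) (hσ1 : σ ≤ 1) (hα0 : 0 ≤ α)
    (hα1 : α ≤ 1) {T c : ℝ} (hc : c ∈ holderQuotients (α - σ) σ T fun τ : ℝ => τ ^ (α - 1)) :
    c ≤ T ^ σ := by
  obtain ⟨s, t, hs, hst, htT, rfl⟩ := hc
  exact (holderQuotient_rpow_le hσ0 hσ1 hα0 hα1 hs hst).trans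
    (Real.rpow_le_rpow hs.le (hst.le.trans htT) hσ0)

end

theorem rpow_mem_F_general (α σ T : ℝ) (hσ : 0 < σ) (hσα : σ < α) (hα : α < 1) :
    MemF (α - σ) σ T (fun τ : ℝ => τ ^ (α - 1)) ∧
    Tendsto (fun t : ℝ => t ^ (1 - (α - σ)) • (t ^ (α - 1)))
      (𝓝[>] (0:ℝ)) (𝓝 (0:ℝ)) := by
  have hσ1 : σ ≤ 1 := by linarith
  have hα0 : 0 ≤ α := by linarith
  have hpow : Tendsto (fun t : ℝ => t ^ σ) (𝓝[>] 0) (𝓝 0) := by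
    simpa [Real.zero_rpow hσ.ne'] using
      (Real.continuousAt_rpow_const 0 σ (Or.inr hσ.le)).tendsto.mono_left nhdsWithin_le_nhds
  have hlim : Tendsto (fun t : ℝ => t ^ (1 - (α - σ)) • t ^ (α - 1)) (𝓝[>] 0) (𝓝 0) := by
    refine hpow.congr' (eventually_nhdsWithin_of_forall fun t (ht : 0 < t) => ?_)
    show t ^ σ = t ^ (1 - (α - σ)) * t ^ (α - 1)
    rw [← Real.rpow_add ht]
    ring_nf
  refine ⟨⟨fun x hx => ?_, ⟨0, hlim⟩, ⟨T ^ σ, fun c hc => ?_⟩, ?_⟩, hlim⟩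
  · exact (Real.continuousAt_rpow_const x _ (Or.inl hx.1.ne')).continuousWithinAt
  · exact le_rpow_of_mem_holderQuotients_rpow hσ.le hσ1 hα0 hα.le hc
  · refine tendsto_of_tendsto_of_tendsto_of_le_of_le' tendsto_const_nhds hpow
      (Eventually.of_forall fun t' => Real.sSup_nonneg fun c => holderQuotients_nonneg)
      (eventually_nhdsWithin_of_forall fun t' (ht' : 0 < t') => ?_)
    exact Real.sSup_le (fun c hc => le_rpow_of_mem_holderQuotients_rpow hσ.le hσ1 hα0 hα.le hc)
      (by positivity)

/-- For `0 < σ < α < 1`, the function `τ ↦ τ^(α-1)` belongs to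
`F^{α-σ,σ}((0,T];ℝ)`, and `t^(1-(α-σ)) * t^(α-1) = t^σ → 0` as `t → 0`. -/
theorem rpow_mem_F (α σ T : ℝ) (hσ : 0 < σ) (hσα : σ < α) (hα : α < 1) (hT : 0 < T) :
    MemF (α - σ) σ T (fun τ : ℝ => τ ^ (α - 1)) ∧
    Tendsto (fun t : ℝ => t ^ (1 - (α - σ)) • (t ^ (α - 1)))
      (𝓝[>] (0:ℝ)) (𝓝 (0:ℝ)) :=
  rpow_mem_F_general α σ T hσ hσα hα
end

section
/- Let a, b, μ, ν, C, ε, T > 0 and let w : (0,T] → ℝ satisfy 0 ≤ w(t) ≤ C t^{ε-1} for all t ∈ (0,T]. If w(t) ≤ a t^{μ-1} + b ∫₀^t (t-τ)^{ν-1} w(τ) dτ for all 0 < t ≤ T, then w(t) ≤ a Γ(μ) t^{μ-1} E_{μ,ν}((b Γ(ν))^{1/ν} t) for all 0 < t ≤ T, where E_{μ,ν}(t) = Σ_{n≥0} t^{nν} / Γ(μ + nν). -/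
/-
Iterating the inequality turns the a priori bound `C t^(ε-1)` into
`a Γ(μ) Σ_{j<n} g_j^μ(t) + C Γ(ε) g_n^ε(t)` with `g_j^c(t) = K^j t^(c+jν-1) / Γ(c+jν)` and
`K = b Γ(ν)`, because by the Beta integral the kernel maps powers to powers:
`b ∫₀ᵗ (t-τ)^(ν-1) τ^(c-1) dτ = K Γ(c) / Γ(c+ν) · t^(c+ν-1)`.
With `x = K^(1/ν) t` one has `g_j^c(t) = t^(c-1) x^(jν) / Γ(c+jν)`, so the sum tends to
`Γ(μ) t^(μ-1) E_{μ,ν}(x)`, and the remainder, a term of the convergent series of `E_{ε,ν}(x)`,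
tends to `0`. Convergence is the ratio test, via `Γ(s+ν) ≥ (s-1)^ν Γ(s)`, which follows from
the log-convexity of `Γ`.
-/

open MeasureTheory Set Real

noncomputable def mittagLeffler (μ ν t : ℝ) : ℝ :=
  ∑' n : ℕ, t ^ ((n : ℝ) * ν) / Real.Gamma (μ + (n : ℝ) * ν)

open Filter Topology

theorem intervalIntegrable_sub_rpow_mul_rpow {p q c : ℝ} (hp : 0 < p) (hq : 0 < q)
    (hc : 0 < c) : IntervalIntegrable (fun τ => (c - τ) ^ (p - 1) * τ ^ (q - 1)) volume 0 c := by
  have left : ∀ {p q : ℝ}, 0 < q →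
      IntervalIntegrable (fun τ => (c - τ) ^ (p - 1) * τ ^ (q - 1)) volume 0 (c / 2) := by
    intro p q hq
    refine (intervalIntegral.intervalIntegrable_rpow' (by linarith)).continuousOn_mul ?_
    refine (continuousOn_const.sub continuousOn_id).rpow_const fun τ hτ => Or.inl ?_
    rw [uIcc_of_le (by linarith)] at hτ
    exact (sub_pos.2 (show τ < c by linarith [hτ.2])).ne'
  -- the right half is the left half for `(q, p)`, reflected by `τ ↦ c - τ`
  have right := ((left (p := q) hp).comp_sub_left c).symm
  simp only [sub_sub_cancel, sub_zero, sub_half, mul_comm (_ ^ (q - 1))] at right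
  exact (left hq).trans right

theorem integral_sub_rpow_mul_rpow {p q c : ℝ} (hp : 0 < p) (hq : 0 < q) (hc : 0 < c) :
    ∫ τ in (0:ℝ)..c, (c - τ) ^ (p - 1) * τ ^ (q - 1) =
      Gamma p * Gamma q / Gamma (p + q) * c ^ (p + q - 1) := by
  have hΓ : Complex.Gamma (q + p) ≠ 0 := by
    rw [← Complex.ofReal_add, Complex.Gamma_ofReal]
    exact_mod_cast (Gamma_pos_of_pos (by linarith)).ne'
  have hbeta : Complex.betaIntegral q p =
      Complex.Gamma q * Complex.Gamma p / Complex.Gamma (q + p) :=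
    eq_div_of_mul_eq hΓ <| by
      rw [Complex.Gamma_mul_Gamma_eq_betaIntegral (by simpa) (by simpa), mul_comm]
  have hcast : ∫ τ in (0:ℝ)..c, (((c - τ) ^ (p - 1) * τ ^ (q - 1) : ℝ) : ℂ) =
      ∫ τ in (0:ℝ)..c, (τ : ℂ) ^ ((q : ℂ) - 1) * ((c : ℂ) - τ) ^ ((p : ℂ) - 1) := by
    refine intervalIntegral.integral_congr fun τ hτ => ?_
    rw [uIcc_of_le hc.le] at hτ
    simp only [Complex.ofReal_mul, Complex.ofReal_cpow (sub_nonneg.2 hτ.2),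
      Complex.ofReal_cpow hτ.1]
    push_cast
    ring
  apply Complex.ofReal_injective
  rw [← intervalIntegral.integral_ofReal, hcast, Complex.betaIntegral_scaled _ _ hc, hbeta]
  push_cast [Complex.ofReal_cpow hc.le, ← Complex.Gamma_ofReal]
  ring_nf

theorem Real.Gamma_mul_sub_one_rpow_le_Gamma_add {s ν : ℝ} (hs : 1 < s) (hν : 0 < ν) :
    Gamma s * (s - 1) ^ ν ≤ Gamma (s + ν) := by
  have hs1 : 0 < s - 1 := by linarith
  have hΓ : 0 < Gamma (s - 1) := Gamma_pos_of_pos hs1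
  have hrec : Gamma s = (s - 1) * Gamma (s - 1) := by
    simpa using Gamma_add_one (s := s - 1) hs1.ne'
  have hslope := convexOn_log_Gamma.slope_mono_adjacent (x := s - 1) (y := s) (z := s + ν)
    (mem_Ioi.2 hs1) (mem_Ioi.2 (by linarith)) (by linarith) (by linarith)
  simp only [Function.comp, hrec, log_mul hs1.ne' hΓ.ne', sub_sub_cancel, div_one,
    add_sub_cancel_left, add_sub_cancel_right] at hslope
  rw [le_div_iff₀ hν] at hslope
  rw [← log_le_log_iff (by positivity) (Gamma_pos_of_pos (by linarith)),
    log_mul (by positivity) (by positivity), log_rpow hs1, hrec, log_mul hs1.ne' hΓ.ne']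
  linarith

theorem summable_mittagLeffler_term (μ : ℝ) {ν x : ℝ} (hν : 0 < ν) (hx : 0 ≤ x) :
    Summable fun n : ℕ => x ^ ((n : ℝ) * ν) / Gamma (μ + n * ν) := by
  refine summable_of_ratio_norm_eventually_le (r := 1 / 2) (by norm_num) ?_
  have hs : Tendsto (fun n : ℕ => μ + n * ν - 1) atTop atTop :=
    tendsto_atTop_add_const_right _ _
      (tendsto_atTop_add_const_left _ _ (tendsto_natCast_atTop_atTop.atTop_mul_const hν))
  filter_upwards [hs.eventually_gt_atTop 0,
    ((tendsto_rpow_atTop hν).comp hs).eventually_ge_atTop (2 * x ^ ν)] with n hs1 hsx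
  set s := μ + n * ν
  have hΓ : 0 < Gamma s := Gamma_pos_of_pos (by linarith)
  have hΓsν : 0 < Gamma (s + ν) := Gamma_pos_of_pos (by linarith)
  have hΓν := Gamma_mul_sub_one_rpow_le_Gamma_add (show 1 < s by linarith) hν
  have hsucc : μ + ((n + 1 : ℕ) : ℝ) * ν = s + ν := by push_cast; ring
  have hpow : x ^ (((n + 1 : ℕ) : ℝ) * ν) = x ^ ((n : ℝ) * ν) * x ^ ν := by
    rw [← rpow_add_of_nonneg hx (by positivity) hν.le]; push_cast; ring_nf
  have hA : 0 ≤ x ^ ((n : ℝ) * ν) / Gamma s := div_nonneg (rpow_nonneg hx _) hΓ.le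
  have hxν : x ^ ν ≤ (s - 1) ^ ν / 2 := by simp only [Function.comp] at hsx; linarith
  rw [hsucc, hpow, norm_of_nonneg hA, norm_of_nonneg (by positivity), div_le_iff₀ hΓsν]
  calc x ^ ((n : ℝ) * ν) * x ^ ν = x ^ ((n : ℝ) * ν) / Gamma s * Gamma s * x ^ ν := by
        rw [div_mul_cancel₀ _ hΓ.ne']
    _ ≤ x ^ ((n : ℝ) * ν) / Gamma s * (Gamma s * ((s - 1) ^ ν / 2)) := by
        rw [mul_assoc]; gcongr
    _ ≤ 1 / 2 * (x ^ ((n : ℝ) * ν) / Gamma s) * Gamma (s + ν) := by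
        linarith [mul_le_mul_of_nonneg_left hΓν hA]

theorem hasSum_mittagLeffler (μ : ℝ) {ν x : ℝ} (hν : 0 < ν) (hx : 0 ≤ x) :
    HasSum (fun n : ℕ => x ^ ((n : ℝ) * ν) / Gamma (μ + n * ν)) (mittagLeffler μ ν x) :=
  (summable_mittagLeffler_term μ hν hx).hasSum

-- the Riemann–Liouville integral of order `ν`, without its factor `1 / Γ(ν)`
noncomputable def abelIntegral (ν : ℝ) (φ : ℝ → ℝ) (t : ℝ) : ℝ :=
  ∫ τ in (0:ℝ)..t, (t - τ) ^ (ν - 1) * φ τ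

def AbelIntegrable (ν : ℝ) (φ : ℝ → ℝ) (t : ℝ) : Prop :=
  IntervalIntegrable (fun τ => (t - τ) ^ (ν - 1) * φ τ) volume 0 t

section AbelIntegral

variable {ν t : ℝ} {φ ψ : ℝ → ℝ}

theorem AbelIntegrable.add (hφ : AbelIntegrable ν φ t) (hψ : AbelIntegrable ν ψ t) :
    AbelIntegrable ν (fun τ => φ τ + ψ τ) t := by
  simpa only [AbelIntegrable, mul_add] using IntervalIntegrable.add hφ hψ

theorem AbelIntegrable.const_mul (hφ : AbelIntegrable ν φ t) (c : ℝ) :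
    AbelIntegrable ν (fun τ => c * φ τ) t := by
  simpa only [AbelIntegrable, mul_left_comm c] using IntervalIntegrable.const_mul hφ c

theorem AbelIntegrable.sum {ι : Type*} {s : Finset ι} {φ : ι → ℝ → ℝ}
    (h : ∀ i ∈ s, AbelIntegrable ν (φ i) t) :
    AbelIntegrable ν (fun τ => ∑ i ∈ s, φ i τ) t := by
  simpa only [AbelIntegrable, Finset.mul_sum, Finset.sum_fn] using IntervalIntegrable.sum s h

theorem abelIntegral_add (hφ : AbelIntegrable ν φ t) (hψ : AbelIntegrable ν ψ t) :
    abelIntegral ν (fun τ => φ τ + ψ τ) t = abelIntegral ν φ t + abelIntegral ν ψ t := by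
  simp only [abelIntegral, mul_add]
  exact intervalIntegral.integral_add hφ hψ

theorem abelIntegral_const_mul (c : ℝ) :
    abelIntegral ν (fun τ => c * φ τ) t = c * abelIntegral ν φ t := by
  simp only [abelIntegral, mul_left_comm _ c, intervalIntegral.integral_const_mul]

theorem abelIntegral_sum {ι : Type*} {s : Finset ι} {φ : ι → ℝ → ℝ}
    (h : ∀ i ∈ s, AbelIntegrable ν (φ i) t) :
    abelIntegral ν (fun τ => ∑ i ∈ s, φ i τ) t = ∑ i ∈ s, abelIntegral ν (φ i) t := by
  simp only [abelIntegral, Finset.mul_sum]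
  exact intervalIntegral.integral_finsetSum h

theorem abelIntegral_mono (ht : 0 ≤ t) (hψ : AbelIntegrable ν ψ t)
    (hψ0 : ∀ τ ∈ Ioc 0 t, 0 ≤ ψ τ) (hφψ : ∀ τ ∈ Ioc 0 t, φ τ ≤ ψ τ) :
    abelIntegral ν φ t ≤ abelIntegral ν ψ t := by
  have hIoc : ∀ᵐ τ ∂volume.restrict (Icc 0 t), τ ∈ Ioc 0 t := by
    rw [← Measure.restrict_congr_set Ioc_ae_eq_Icc]
    exact ae_restrict_mem measurableSet_Ioc
  have hkernel : ∀ τ ∈ Ioc 0 t, 0 ≤ (t - τ) ^ (ν - 1) :=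
    fun τ hτ => rpow_nonneg (sub_nonneg.2 hτ.2) _
  by_cases hφ : AbelIntegrable ν φ t
  · exact intervalIntegral.integral_mono_ae_restrict ht hφ hψ <| hIoc.mono fun τ hτ =>
      mul_le_mul_of_nonneg_left (hφψ τ hτ) (hkernel τ hτ)
  · -- a non-integrable integrand has integral `0`
    rw [abelIntegral, intervalIntegral.integral_undef hφ]
    exact intervalIntegral.integral_nonneg_of_ae_restrict ht <| hIoc.mono fun τ hτ =>
      mul_nonneg (hkernel τ hτ) (hψ0 τ hτ)

theorem abelIntegrable_rpow (hν : 0 < ν) {c : ℝ} (hc : 0 < c) (ht : 0 < t) :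
    AbelIntegrable ν (fun τ => τ ^ (c - 1)) t :=
  intervalIntegrable_sub_rpow_mul_rpow hν hc ht

theorem abelIntegral_rpow (hν : 0 < ν) {c : ℝ} (hc : 0 < c) (ht : 0 < t) :
    abelIntegral ν (fun τ => τ ^ (c - 1)) t =
      Gamma ν * Gamma c / Gamma (ν + c) * t ^ (ν + c - 1) :=
  integral_sub_rpow_mul_rpow hν hc ht

end AbelIntegral

theorem le_add_abelIntegral_of_le {ν b T : ℝ} (hb : 0 ≤ b) {p w ψ : ℝ → ℝ}
    (hineq : ∀ t ∈ Ioc 0 T, w t ≤ p t + b * abelIntegral ν w t)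
    (hψ : ∀ t ∈ Ioc 0 T, AbelIntegrable ν ψ t) (hψ0 : ∀ t ∈ Ioc 0 T, 0 ≤ ψ t)
    (hwψ : ∀ t ∈ Ioc 0 T, w t ≤ ψ t) :
    ∀ t ∈ Ioc 0 T, w t ≤ p t + b * abelIntegral ν ψ t := by
  intro t ht
  have hsub : Ioc 0 t ⊆ Ioc 0 T := Ioc_subset_Ioc_right ht.2
  have hmono := abelIntegral_mono ht.1.le (hψ t ht) (fun τ hτ => hψ0 τ (hsub hτ))
    (fun τ hτ => hwψ τ (hsub hτ))
  linarith [hineq t ht, mul_le_mul_of_nonneg_left hmono hb]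

noncomputable def henryTerm (K ν c : ℝ) (n : ℕ) (t : ℝ) : ℝ :=
  K ^ n / Gamma (c + n * ν) * t ^ (c + n * ν - 1)

section HenryTerm

variable {K ν c t : ℝ}

theorem henryTerm_zero : henryTerm K ν c 0 t = t ^ (c - 1) / Gamma c := by
  simp [henryTerm, div_eq_inv_mul]

theorem henryTerm_nonneg (hK : 0 ≤ K) (hν : 0 ≤ ν) (hc : 0 < c) (ht : 0 ≤ t) (n : ℕ) :
    0 ≤ henryTerm K ν c n t :=
  mul_nonneg (div_nonneg (pow_nonneg hK n) (Gamma_pos_of_pos (by positivity)).le)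
    (rpow_nonneg ht _)

theorem abelIntegrable_henryTerm (hν : 0 < ν) (hc : 0 < c) (ht : 0 < t) (n : ℕ) :
    AbelIntegrable ν (henryTerm K ν c n) t :=
  (abelIntegrable_rpow hν (by positivity) ht).const_mul _

theorem mul_abelIntegral_henryTerm {b : ℝ} (hν : 0 < ν) (hc : 0 < c) (ht : 0 < t) (n : ℕ) :
    b * abelIntegral ν (henryTerm (b * Gamma ν) ν c n) t =
      henryTerm (b * Gamma ν) ν c (n + 1) t := by
  have hcn : 0 < c + n * ν := by positivity
  have hΓ := (Gamma_pos_of_pos hcn).ne'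
  unfold henryTerm
  rw [abelIntegral_const_mul, abelIntegral_rpow hν hcn ht,
    show ν + (c + n * ν) = c + (n + 1 : ℕ) * ν by push_cast; ring]
  field_simp
  ring

theorem henryTerm_eq_mul_rpow_div_Gamma (hK : 0 ≤ K) (hν : ν ≠ 0) (ht : 0 < t) (n : ℕ) :
    henryTerm K ν c n t =
      t ^ (c - 1) * ((K ^ (1 / ν) * t) ^ ((n : ℝ) * ν) / Gamma (c + n * ν)) := by
  rw [henryTerm, mul_rpow (rpow_nonneg hK _) ht.le, ← rpow_mul hK,
    show 1 / ν * (n * ν) = n by field_simp, rpow_natCast, add_sub_right_comm, rpow_add ht]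
  ring

end HenryTerm

noncomputable def henryBound (K ν μ ε a C : ℝ) (n : ℕ) (t : ℝ) : ℝ :=
  a * Gamma μ * ∑ j ∈ Finset.range n, henryTerm K ν μ j t + C * Gamma ε * henryTerm K ν ε n t

section HenryBound

variable {K ν μ ε a C t : ℝ}

theorem henryBound_zero (hε : 0 < ε) : henryBound K ν μ ε a C 0 t = C * t ^ (ε - 1) := by
  rw [henryBound, Finset.sum_range_zero, mul_zero, zero_add, henryTerm_zero, mul_assoc,
    mul_div_cancel₀ _ (Gamma_pos_of_pos hε).ne']

theorem henryBound_nonneg (hK : 0 ≤ K) (hν : 0 ≤ ν) (hμ : 0 < μ) (hε : 0 < ε) (ha : 0 ≤ a)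
    (hC : 0 ≤ C) (ht : 0 ≤ t) (n : ℕ) : 0 ≤ henryBound K ν μ ε a C n t :=
  add_nonneg (mul_nonneg (mul_nonneg ha (Gamma_pos_of_pos hμ).le)
      (Finset.sum_nonneg fun j _ => henryTerm_nonneg hK hν hμ ht j))
    (mul_nonneg (mul_nonneg hC (Gamma_pos_of_pos hε).le) (henryTerm_nonneg hK hν hε ht n))

theorem abelIntegrable_henryBound (hν : 0 < ν) (hμ : 0 < μ) (hε : 0 < ε) (ht : 0 < t)
    (n : ℕ) : AbelIntegrable ν (henryBound K ν μ ε a C n) t :=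
  ((AbelIntegrable.sum fun j _ => abelIntegrable_henryTerm hν hμ ht j).const_mul _).add
    ((abelIntegrable_henryTerm hν hε ht n).const_mul _)

theorem add_mul_abelIntegral_henryBound {b : ℝ} (hν : 0 < ν) (hμ : 0 < μ) (hε : 0 < ε)
    (ht : 0 < t) (n : ℕ) :
    a * t ^ (μ - 1) + b * abelIntegral ν (henryBound (b * Gamma ν) ν μ ε a C n) t =
      henryBound (b * Gamma ν) ν μ ε a C (n + 1) t := by
  unfold henryBound
  rw [abelIntegral_add
      ((AbelIntegrable.sum fun j _ => abelIntegrable_henryTerm hν hμ ht j).const_mul _)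
      ((abelIntegrable_henryTerm hν hε ht n).const_mul _),
    abelIntegral_const_mul, abelIntegral_const_mul,
    abelIntegral_sum fun j _ => abelIntegrable_henryTerm hν hμ ht j, mul_add, mul_left_comm b,
    mul_left_comm b, Finset.mul_sum, mul_abelIntegral_henryTerm hν hε ht]
  simp only [mul_abelIntegral_henryTerm hν hμ ht]
  rw [Finset.sum_range_succ' _ n, henryTerm_zero]
  field_simp
  ring

theorem tendsto_henryBound (hK : 0 ≤ K) (hν : 0 < ν) (ht : 0 < t) :
    Tendsto (fun n => henryBound K ν μ ε a C n t) atTop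
      (𝓝 (a * Gamma μ * t ^ (μ - 1) * mittagLeffler μ ν (K ^ (1 / ν) * t))) := by
  have hx : 0 ≤ K ^ (1 / ν) * t := mul_nonneg (rpow_nonneg hK _) ht.le
  have hpartial := ((hasSum_mittagLeffler μ hν hx).mul_left (t ^ (μ - 1))).tendsto_sum_nat
  have hremainder := (summable_mittagLeffler_term ε hν hx).tendsto_atTop_zero
  simpa only [henryBound, henryTerm_eq_mul_rpow_div_Gamma hK hν.ne' ht, mul_zero, add_zero,
    mul_assoc] using
    (hpartial.const_mul (a * Gamma μ)).add ((hremainder.const_mul _).const_mul (C * Gamma ε))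

end HenryBound

theorem le_henryBound {a b μ ν C ε T : ℝ} (ha : 0 ≤ a) (hb : 0 ≤ b) (hμ : 0 < μ) (hν : 0 < ν)
    (hC : 0 ≤ C) (hε : 0 < ε) {w : ℝ → ℝ} (hwC : ∀ t ∈ Ioc 0 T, w t ≤ C * t ^ (ε - 1))
    (hineq : ∀ t ∈ Ioc 0 T, w t ≤ a * t ^ (μ - 1) + b * abelIntegral ν w t) (n : ℕ) :
    ∀ t ∈ Ioc 0 T, w t ≤ henryBound (b * Gamma ν) ν μ ε a C n t := by
  have hK : 0 ≤ b * Gamma ν := mul_nonneg hb (Gamma_pos_of_pos hν).le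
  induction n with
  | zero => simpa only [henryBound_zero hε] using hwC
  | succ n ih =>
    intro t ht
    rw [← add_mul_abelIntegral_henryBound hν hμ hε ht.1]
    exact le_add_abelIntegral_of_le hb hineq
      (fun t ht => abelIntegrable_henryBound hν hμ hε ht.1 n)
      (fun t ht => henryBound_nonneg hK hν.le hμ hε ha hC ht.1.le n) ih t ht

theorem gronwall_henry_general (a b μ ν C ε T : ℝ)
    (ha : 0 < a) (hb : 0 < b) (hμ : 0 < μ) (hν : 0 < ν) (hC : 0 < C) (hε : 0 < ε)
    (w : ℝ → ℝ)
    (hwC : ∀ t ∈ Set.Ioc (0:ℝ) T, w t ≤ C * t ^ (ε - 1))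
    (hineq : ∀ t ∈ Set.Ioc (0:ℝ) T,
      w t ≤ a * t ^ (μ - 1) + b * ∫ τ in (0:ℝ)..t, (t - τ) ^ (ν - 1) * w τ) :
    ∀ t ∈ Set.Ioc (0:ℝ) T,
      w t ≤ a * Real.Gamma μ * t ^ (μ - 1) *
        mittagLeffler μ ν ((b * Real.Gamma ν) ^ (1 / ν) * t) := fun t ht =>
  ge_of_tendsto' (tendsto_henryBound (mul_pos hb (Gamma_pos_of_pos hν)).le hν ht.1)
    fun n => le_henryBound ha.le hb.le hμ hν hC.le hε hwC hineq n t ht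

/-- Singular-kernel Gronwall (Henry) inequality: if `0 ≤ w(t) ≤ C t^{ε-1}` and
`w(t) ≤ a t^{μ-1} + b ∫₀ᵗ (t-τ)^{ν-1} w(τ) dτ` on `(0,T]`, then
`w(t) ≤ a Γ(μ) t^{μ-1} E_{μ,ν}((bΓ(ν))^{1/ν} t)` on `(0,T]`. -/
theorem gronwall_henry (a b μ ν C ε T : ℝ)
    (ha : 0 < a) (hb : 0 < b) (hμ : 0 < μ) (hν : 0 < ν) (hC : 0 < C) (hε : 0 < ε)
    (hT : 0 < T) (w : ℝ → ℝ)
    (hw0 : ∀ t ∈ Set.Ioc (0:ℝ) T, 0 ≤ w t)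
    (hwC : ∀ t ∈ Set.Ioc (0:ℝ) T, w t ≤ C * t ^ (ε - 1))
    (hineq : ∀ t ∈ Set.Ioc (0:ℝ) T,
      w t ≤ a * t ^ (μ - 1) + b * ∫ τ in (0:ℝ)..t, (t - τ) ^ (ν - 1) * w τ) :
    ∀ t ∈ Set.Ioc (0:ℝ) T,
      w t ≤ a * Real.Gamma μ * t ^ (μ - 1) *
        mittagLeffler μ ν ((b * Real.Gamma ν) ^ (1 / ν) * t) :=
  gronwall_henry_general a b μ ν C ε T ha hb hμ hν hC hε w hwC hineq
end

section
/- Let X be a Banach space, 0 < α < 1, 0 < γ < α/2 (so κ := α - γ satisfies α/2 < κ < α), T > 0, and constants a, b, L ≥ 0. Suppose functions u₁, u₂ ∈ C((0,T];X) satisfy ‖u₁(t) - u₂(t)‖ ≤ a ∫₀^t (t-τ)^{α-1} τ^{κ-1} e^{μt} e^{-μ(t-τ)} e^{-μτ} · (τ^{1-κ}‖v₁(τ)-v₂(τ)‖) dτ pointwise for functions v₁, v₂ with |‖v₁ - v₂‖|_μ := sup_t e^{-μt} t^{1-κ} ‖v₁(t)-v₂(t)‖ < ∞. Then for p = 1+ε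 with ε small enough that (1+ε)α - ε > 0 and (1+ε)κ - ε > 0, one has sup_{0≤t≤T} e^{-μt} t^{1-κ} ‖u₁(t)-u₂(t)‖ ≤ a B_μ B(p(α-1)+1, p(κ-1)+1)^{1/p} T^{α - ε/(1+ε)} |‖v₁-v₂‖|_μ, where B_μ = (∫₀^T e^{-μqτ} dτ)^{1/q} with 1/p + 1/q = 1 and B(·,·) is the Beta function; in particular B_μ → 0 as μ → ∞. -/
/-!
Bounding `e^{-μτ} τ^{1-κ} ‖v₁ τ - v₂ τ‖` by its supremum `M` cancels the exponential weights and
leaves `M ∫₀ᵗ (t-τ)^{α-1} τ^{κ-1} e^{-μ(t-τ)} dτ`. Hölder's inequality with exponents `p, q`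
splits this into the scaled Beta integral
`∫₀ᵗ (t-τ)^{p(α-1)} τ^{p(κ-1)} dτ = t^{p(α+κ-2)+1} B(p(α-1)+1, p(κ-1)+1)` and `∫₀ᵗ e^{-μqs} ds`,
and the weight `t^{1-κ}` combines with `t^{α+κ-2+1/p}` into `t^{α-1+1/p} = t^{α-ε/(1+ε)}`.
Finally `∫₀ᵀ e^{-μqs} ds ≤ 1/(μq)`, so `B_μ → 0`.
-/

open MeasureTheory Set Real

/-- The Beta function `B(x,y) = Γ(x)Γ(y)/Γ(x+y)`. -/
noncomputable def betaFn (x y : ℝ) : ℝ :=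
  Real.Gamma x * Real.Gamma y / Real.Gamma (x + y)

open Filter Topology intervalIntegral

lemma betaFn_pos {x y : ℝ} (hx : 0 < x) (hy : 0 < y) : 0 < betaFn x y :=
  ProbabilityTheory.beta_pos hx hy

lemma betaFn_comm (x y : ℝ) : betaFn x y = betaFn y x := by
  rw [betaFn, betaFn, add_comm, mul_comm]

lemma Complex.betaIntegral_ofReal {x y : ℝ} (hx : 0 < x) (hy : 0 < y) :
    betaIntegral x y = betaFn x y := by
  rw [betaIntegral_eq_Gamma_mul_div _ _ (by simpa) (by simpa), ← ofReal_add,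
    Gamma_ofReal, Gamma_ofReal, Gamma_ofReal, betaFn]
  push_cast
  rfl

lemma integral_sub_rpow_mul_rpow_s19 {x y t : ℝ} (hx : 0 < x) (hy : 0 < y) (ht : 0 < t) :
    ∫ τ in (0:ℝ)..t, (t - τ) ^ (x - 1) * τ ^ (y - 1) = t ^ (x + y - 1) * betaFn x y := by
  have hcast : ∀ τ ∈ uIcc (0:ℝ) t, (((t - τ) ^ (x - 1) * τ ^ (y - 1) : ℝ) : ℂ) =
      (τ : ℂ) ^ ((y : ℂ) - 1) * ((t : ℂ) - τ) ^ ((x : ℂ) - 1) := by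
    intro τ hτ
    rw [uIcc_of_le ht.le] at hτ
    rw [Complex.ofReal_mul, Complex.ofReal_cpow (sub_nonneg.2 hτ.2),
      Complex.ofReal_cpow hτ.1, mul_comm]
    push_cast
    rfl
  apply Complex.ofReal_injective
  rw [← integral_ofReal, integral_congr hcast, Complex.betaIntegral_scaled _ _ ht,
    Complex.betaIntegral_ofReal hy hx, betaFn_comm]
  push_cast
  rw [Complex.ofReal_cpow ht.le]
  push_cast
  ring_nf

lemma intervalIntegrable_sub_rpow_mul_rpow_s19 {x y t : ℝ} (hx : 0 < x) (hy : 0 < y) (ht : 0 < t) :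
    IntervalIntegrable (fun τ => (t - τ) ^ (x - 1) * τ ^ (y - 1)) volume 0 t := by
  apply intervalIntegrable_of_integral_ne_zero
  rw [integral_sub_rpow_mul_rpow_s19 hx hy ht]
  exact (mul_pos (rpow_pos_of_pos ht _) (betaFn_pos hx hy)).ne'

lemma MeasureTheory.memLp_ofReal_of_integrable_rpow {X : Type*} [MeasurableSpace X]
    {μ : Measure X} {p : ℝ} (hp : 0 < p) {f : X → ℝ} (hf0 : 0 ≤ᵐ[μ] f)
    (hf : AEStronglyMeasurable f μ) (hfp : Integrable (fun x => f x ^ p) μ) :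
    MemLp f (ENNReal.ofReal p) μ := by
  rw [← integrable_norm_rpow_iff hf (by simpa) ENNReal.ofReal_ne_top, ENNReal.toReal_ofReal hp.le]
  refine hfp.congr ?_
  filter_upwards [hf0] with x hx
  rw [norm_of_nonneg hx]

lemma integral_sub_rpow_mul_rpow_mul_exp_le {α κ μ p q t : ℝ} (hpq : p.HolderConjugate q)
    (hα : 0 < p * (α - 1) + 1) (hκ : 0 < p * (κ - 1) + 1) (ht : 0 < t) :
    IntervalIntegrable (fun τ => (t - τ) ^ (α - 1) * τ ^ (κ - 1) * exp (-μ * (t - τ)))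
      volume 0 t ∧
    ∫ τ in (0:ℝ)..t, (t - τ) ^ (α - 1) * τ ^ (κ - 1) * exp (-μ * (t - τ)) ≤
      t ^ (α + κ - 2 + 1 / p) * betaFn (p * (α - 1) + 1) (p * (κ - 1) + 1) ^ (1 / p) *
        (∫ s in (0:ℝ)..t, exp (-μ * q * s)) ^ (1 / q) := by
  set ν := volume.restrict (Ioc (0:ℝ) t)
  set f : ℝ → ℝ := fun τ => (t - τ) ^ (α - 1) * τ ^ (κ - 1)
  have hmem : ∀ᵐ τ ∂ν, τ ∈ Ioc (0:ℝ) t := ae_restrict_mem measurableSet_Ioc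
  have hf0 : 0 ≤ᵐ[ν] f := by
    filter_upwards [hmem] with τ hτ
    exact mul_nonneg (rpow_nonneg (sub_nonneg.2 hτ.2) _) (rpow_nonneg hτ.1.le _)
  have hfp : ∀ᵐ τ ∂ν,
      f τ ^ p = (t - τ) ^ (p * (α - 1) + 1 - 1) * τ ^ (p * (κ - 1) + 1 - 1) := by
    filter_upwards [hmem] with τ hτ
    rw [mul_rpow (rpow_nonneg (sub_nonneg.2 hτ.2) _) (rpow_nonneg hτ.1.le _),
      ← rpow_mul (sub_nonneg.2 hτ.2), ← rpow_mul hτ.1.le]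
    ring_nf
  have hgq : ∀ τ, exp (-μ * (t - τ)) ^ q = exp (-μ * q * (t - τ)) := fun τ => by
    rw [← exp_mul]; ring_nf
  have hfp_int : Integrable (fun τ => f τ ^ p) ν :=
    (intervalIntegrable_iff_integrableOn_Ioc_of_le ht.le |>.1
      (intervalIntegrable_sub_rpow_mul_rpow_s19 hα hκ ht)).congr (hfp.mono fun _ h => h.symm)
  have hgq_int : Integrable (fun τ => exp (-μ * (t - τ)) ^ q) ν := by
    simp only [hgq]
    exact Continuous.integrableOn_Ioc (by fun_prop)
  have hf_mem := memLp_ofReal_of_integrable_rpow hpq.pos hf0 (by fun_prop) hfp_int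
  have hg_mem := memLp_ofReal_of_integrable_rpow hpq.symm.pos
    (ae_of_all _ fun τ => (exp_pos _).le) (by fun_prop) hgq_int
  have := hpq.ennrealOfReal
  refine ⟨(intervalIntegrable_iff_integrableOn_Ioc_of_le ht.le).2
    (hf_mem.integrable_mul hg_mem), ?_⟩
  have hholder := integral_mul_le_Lp_mul_Lq_of_nonneg hpq hf0
    (ae_of_all _ fun τ => (exp_pos _).le) hf_mem hg_mem
  have hbeta : ∫ τ, f τ ^ p ∂ν = t ^ (p * (α - 1) + 1 + (p * (κ - 1) + 1) - 1) *
      betaFn (p * (α - 1) + 1) (p * (κ - 1) + 1) := by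
    rw [integral_congr_ae hfp, ← integral_of_le ht.le, integral_sub_rpow_mul_rpow_s19 hα hκ ht]
  have hexp : ∫ τ, exp (-μ * (t - τ)) ^ q ∂ν = ∫ s in (0:ℝ)..t, exp (-μ * q * s) := by
    simp only [hgq]
    rw [← integral_of_le ht.le, integral_comp_sub_left (fun s => exp (-μ * q * s)), sub_self,
      sub_zero]
  rw [integral_of_le ht.le]
  refine hholder.trans_eq ?_
  rw [hbeta, hexp, mul_rpow (rpow_nonneg ht.le _) (betaFn_pos hα hκ).le, ← rpow_mul ht.le]
  congr 3
  field_simp [hpq.pos.ne']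
  ring

lemma integral_mul_le_mul_integral_of_le {f w : ℝ → ℝ} {a b M : ℝ} (hab : a ≤ b)
    (hf0 : ∀ τ ∈ Ioc a b, 0 ≤ f τ) (hf : IntervalIntegrable f volume a b) (hM : 0 ≤ M)
    (hw : ∀ τ ∈ Ioc a b, w τ ≤ M) :
    ∫ τ in a..b, f τ * w τ ≤ M * ∫ τ in a..b, f τ := by
  by_cases hfw : IntervalIntegrable (fun τ => f τ * w τ) volume a b
  · rw [← intervalIntegral.integral_const_mul]
    refine integral_mono_on_of_le_Ioo hab hfw (hf.const_mul M) fun τ hτ => ?_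
    rw [mul_comm M]
    exact mul_le_mul_of_nonneg_left (hw τ (Ioo_subset_Ioc_self hτ))
      (hf0 τ (Ioo_subset_Ioc_self hτ))
  · rw [integral_undef hfw, integral_of_le hab]
    exact mul_nonneg hM (setIntegral_nonneg measurableSet_Ioc hf0)

lemma integral_exp_neg_mul_le_inv {c T : ℝ} (hc : 0 < c) (hT : 0 ≤ T) :
    ∫ τ in (0:ℝ)..T, exp (-c * τ) ≤ c⁻¹ := by
  rw [integral_of_le hT]
  calc ∫ τ in Ioc 0 T, exp (-c * τ)
      ≤ ∫ τ in Ioi 0, exp (-c * τ) :=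
        setIntegral_mono_set (exp_neg_integrableOn_Ioi 0 hc)
          (ae_of_all _ fun _ => (exp_pos _).le) Ioc_subset_Ioi_self.eventuallyLE
    _ = c⁻¹ := by rw [integral_exp_mul_Ioi (neg_lt_zero.2 hc)]; simp

lemma tendsto_integral_exp_neg_mul_rpow_atTop {q r T : ℝ} (hq : 0 < q) (hr : 0 < r)
    (hT : 0 ≤ T) :
    Tendsto (fun μ => (∫ τ in (0:ℝ)..T, exp (-μ * q * τ)) ^ r) atTop (𝓝 0) := by
  have hnonneg : ∀ μ, 0 ≤ ∫ τ in (0:ℝ)..T, exp (-μ * q * τ) := fun μ =>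
    integral_nonneg hT fun _ _ => (exp_pos _).le
  refine squeeze_zero' (.of_forall fun μ => rpow_nonneg (hnonneg μ) r) ?_
    ((tendsto_rpow_neg_atTop hr).comp (tendsto_id.atTop_mul_const hq))
  filter_upwards [eventually_gt_atTop 0] with μ hμ
  have hbound : ∫ τ in (0:ℝ)..T, exp (-μ * q * τ) ≤ (μ * q)⁻¹ := by
    simpa only [neg_mul] using integral_exp_neg_mul_le_inv (mul_pos hμ hq) hT
  calc (∫ τ in (0:ℝ)..T, exp (-μ * q * τ)) ^ r ≤ ((μ * q)⁻¹) ^ r :=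
        rpow_le_rpow (hnonneg μ) hbound hr.le
    _ = (μ * q) ^ (-r) := by rw [inv_rpow (mul_pos hμ hq).le, rpow_neg (mul_pos hμ hq).le]

lemma integral_kernel_mul_le {α κ μ p q t M : ℝ} {g : ℝ → ℝ} (hpq : p.HolderConjugate q)
    (hα : 0 < p * (α - 1) + 1) (hκ : 0 < p * (κ - 1) + 1) (ht : 0 < t) (hM : 0 ≤ M)
    (hg : ∀ τ ∈ Ioc 0 t, exp (-μ * τ) * g τ ≤ M) :
    ∫ τ in (0:ℝ)..t, (t - τ) ^ (α - 1) * τ ^ (κ - 1) *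
        (exp (μ * t) * exp (-μ * (t - τ)) * exp (-μ * τ)) * g τ ≤
      exp (μ * t) * M * (t ^ (α + κ - 2 + 1 / p) *
        betaFn (p * (α - 1) + 1) (p * (κ - 1) + 1) ^ (1 / p) *
        (∫ s in (0:ℝ)..t, exp (-μ * q * s)) ^ (1 / q)) := by
  obtain ⟨hint, hle⟩ := integral_sub_rpow_mul_rpow_mul_exp_le (μ := μ) hpq hα hκ ht
  have hK0 : ∀ τ ∈ Ioc 0 t, 0 ≤ exp (μ * t) * ((t - τ) ^ (α - 1) * τ ^ (κ - 1) *
      exp (-μ * (t - τ))) := fun τ hτ => by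
    have := rpow_nonneg (sub_nonneg.2 hτ.2) (α - 1)
    have := rpow_nonneg hτ.1.le (κ - 1)
    positivity
  calc _ = ∫ τ in (0:ℝ)..t, exp (μ * t) * ((t - τ) ^ (α - 1) * τ ^ (κ - 1) *
          exp (-μ * (t - τ))) * (exp (-μ * τ) * g τ) := by
        congr 1; funext τ; ring
    _ ≤ M * ∫ τ in (0:ℝ)..t, exp (μ * t) * ((t - τ) ^ (α - 1) * τ ^ (κ - 1) *
          exp (-μ * (t - τ))) :=
        integral_mul_le_mul_integral_of_le ht.le hK0 (hint.const_mul _) hM hg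
    _ ≤ _ := by
        rw [intervalIntegral.integral_const_mul, ← mul_assoc, mul_comm M]
        gcongr

lemma weighted_integral_kernel_mul_le {α κ μ p q t M : ℝ} {g : ℝ → ℝ}
    (hpq : p.HolderConjugate q) (hα : 0 < p * (α - 1) + 1) (hκ : 0 < p * (κ - 1) + 1)
    (ht : 0 ≤ t) (hM : 0 ≤ M) (hg : ∀ τ ∈ Ioc 0 t, exp (-μ * τ) * g τ ≤ M) :
    exp (-μ * t) * t ^ (1 - κ) * ∫ τ in (0:ℝ)..t, (t - τ) ^ (α - 1) * τ ^ (κ - 1) *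
        (exp (μ * t) * exp (-μ * (t - τ)) * exp (-μ * τ)) * g τ ≤
      M * t ^ (α - 1 + 1 / p) * betaFn (p * (α - 1) + 1) (p * (κ - 1) + 1) ^ (1 / p) *
        (∫ s in (0:ℝ)..t, exp (-μ * q * s)) ^ (1 / q) := by
  have hB := (betaFn_pos hα hκ).le
  rcases ht.eq_or_lt with rfl | ht0
  · rw [integral_same, mul_zero]
    exact mul_nonneg (mul_nonneg (mul_nonneg hM (rpow_nonneg le_rfl _)) (rpow_nonneg hB _))
      (rpow_nonneg (by rw [integral_same]) _)
  have hexp : exp (-μ * t) * exp (μ * t) = 1 := by rw [← exp_add]; simp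
  have htpow : t ^ (1 - κ) * t ^ (α + κ - 2 + 1 / p) = t ^ (α - 1 + 1 / p) := by
    rw [← rpow_add ht0]; ring_nf
  calc _ ≤ exp (-μ * t) * t ^ (1 - κ) * (exp (μ * t) * M * (t ^ (α + κ - 2 + 1 / p) *
          betaFn (p * (α - 1) + 1) (p * (κ - 1) + 1) ^ (1 / p) *
          (∫ s in (0:ℝ)..t, exp (-μ * q * s)) ^ (1 / q))) := by
        gcongr
        exact integral_kernel_mul_le hpq hα hκ ht0 hM hg
    _ = _ := by
        rw [← htpow]
        linear_combination (M * t ^ (1 - κ) * t ^ (α + κ - 2 + 1 / p) *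
          betaFn (p * (α - 1) + 1) (p * (κ - 1) + 1) ^ (1 / p) *
          (∫ s in (0:ℝ)..t, exp (-μ * q * s)) ^ (1 / q)) * hexp

lemma weighted_integral_kernel_mul_le_of_mem_Icc {α κ μ p q t T M : ℝ} {g : ℝ → ℝ}
    (hpq : p.HolderConjugate q) (hα : 0 < p * (α - 1) + 1) (hκ : 0 < p * (κ - 1) + 1)
    (ht : t ∈ Icc 0 T) (hM : 0 ≤ M) (hg : ∀ τ ∈ Ioc 0 t, exp (-μ * τ) * g τ ≤ M) :
    exp (-μ * t) * t ^ (1 - κ) * ∫ τ in (0:ℝ)..t, (t - τ) ^ (α - 1) * τ ^ (κ - 1) *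
        (exp (μ * t) * exp (-μ * (t - τ)) * exp (-μ * τ)) * g τ ≤
      (∫ s in (0:ℝ)..T, exp (-μ * q * s)) ^ (1 / q) *
        betaFn (p * (α - 1) + 1) (p * (κ - 1) + 1) ^ (1 / p) * T ^ (α - 1 + 1 / p) * M := by
  have hexponent : 0 ≤ α - 1 + 1 / p := by
    have := div_pos hα hpq.pos
    rw [add_div, mul_div_cancel_left₀ _ hpq.pos.ne'] at this
    exact this.le
  have hQ : 0 ≤ ∫ s in (0:ℝ)..t, exp (-μ * q * s) :=
    integral_nonneg ht.1 fun _ _ => (exp_pos _).le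
  have hQT : ∫ s in (0:ℝ)..t, exp (-μ * q * s) ≤ ∫ s in (0:ℝ)..T, exp (-μ * q * s) :=
    integral_mono_interval le_rfl ht.1 ht.2 (ae_of_all _ fun _ => (exp_pos _).le)
      (Continuous.intervalIntegrable (by fun_prop) _ _)
  have := (betaFn_pos hα hκ).le
  have := rpow_nonneg (hQ.trans hQT) (1 / q)
  have := rpow_nonneg ht.1 (α - 1 + 1 / p)
  have := (one_div_pos.2 hpq.symm.pos).le
  calc _ ≤ M * t ^ (α - 1 + 1 / p) * betaFn (p * (α - 1) + 1) (p * (κ - 1) + 1) ^ (1 / p) *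
          (∫ s in (0:ℝ)..t, exp (-μ * q * s)) ^ (1 / q) :=
        weighted_integral_kernel_mul_le hpq hα hκ ht.1 hM hg
    _ = (∫ s in (0:ℝ)..t, exp (-μ * q * s)) ^ (1 / q) *
          betaFn (p * (α - 1) + 1) (p * (κ - 1) + 1) ^ (1 / p) * t ^ (α - 1 + 1 / p) * M := by
        ring
    _ ≤ _ := by
        gcongr
        exacts [ht.1, ht.2]

theorem weighted_contraction_estimate_general {X : Type*} [NormedAddCommGroup X]
    (α γ T a μ ε p q : ℝ)
    (hT : 0 < T) (ha : 0 ≤ a)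
    (hε : 0 < ε) (hp : p = 1 + ε)
    (hεα : (1 + ε) * α - ε > 0) (hεκ : (1 + ε) * (α - γ) - ε > 0)
    (hpq : 1 / p + 1 / q = 1)
    (u₁ u₂ v₁ v₂ : ℝ → X)
    (hvbdd : BddAbove (Set.range fun t : Set.Icc (0:ℝ) T =>
      Real.exp (-μ * (t : ℝ)) * (t : ℝ) ^ (1 - (α - γ)) * ‖v₁ (t : ℝ) - v₂ (t : ℝ)‖))
    (hineq : ∀ t ∈ Set.Icc (0:ℝ) T,
      ‖u₁ t - u₂ t‖ ≤ a * ∫ τ in (0:ℝ)..t,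
        (t - τ) ^ (α - 1) * τ ^ ((α - γ) - 1) *
          (Real.exp (μ * t) * Real.exp (-μ * (t - τ)) * Real.exp (-μ * τ)) *
          (τ ^ (1 - (α - γ)) * ‖v₁ τ - v₂ τ‖)) :
    (∀ t ∈ Set.Icc (0:ℝ) T,
      Real.exp (-μ * t) * t ^ (1 - (α - γ)) * ‖u₁ t - u₂ t‖ ≤
        a * (∫ τ in (0:ℝ)..T, Real.exp (-μ * q * τ)) ^ (1 / q) *
          (betaFn (p * (α - 1) + 1) (p * ((α - γ) - 1) + 1)) ^ (1 / p) *
          T ^ (α - ε / (1 + ε)) *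
          (⨆ t : Set.Icc (0:ℝ) T,
            Real.exp (-μ * (t : ℝ)) * (t : ℝ) ^ (1 - (α - γ)) *
              ‖v₁ (t : ℝ) - v₂ (t : ℝ)‖)) ∧
    Filter.Tendsto (fun μ' : ℝ => (∫ τ in (0:ℝ)..T, Real.exp (-μ' * q * τ)) ^ (1 / q))
      Filter.atTop (nhds 0) := by
  have hpq' : p.HolderConjugate q :=
    holderConjugate_iff.2 ⟨by linarith, by simpa only [one_div] using hpq⟩
  refine ⟨fun t ht => ?_, tendsto_integral_exp_neg_mul_rpow_atTop hpq'.symm.pos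
    (one_div_pos.2 hpq'.symm.pos) hT.le⟩
  set κ := α - γ
  set M := ⨆ s : Icc (0:ℝ) T, exp (-μ * s) * (s : ℝ) ^ (1 - κ) * ‖v₁ s - v₂ s‖
  have hM : ∀ s ∈ Icc (0:ℝ) T, exp (-μ * s) * s ^ (1 - κ) * ‖v₁ s - v₂ s‖ ≤ M :=
    fun s hs => le_ciSup hvbdd ⟨s, hs⟩
  have hM0 : 0 ≤ M := le_trans (by positivity) (hM 0 ⟨le_rfl, hT.le⟩)
  have hx : 0 < p * (α - 1) + 1 := by rw [hp]; linarith
  have hy : 0 < p * (κ - 1) + 1 := by rw [hp]; linarith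
  have hexponent : α - ε / (1 + ε) = α - 1 + 1 / p := by rw [hp]; field_simp; ring
  calc exp (-μ * t) * t ^ (1 - κ) * ‖u₁ t - u₂ t‖
      ≤ a * (exp (-μ * t) * t ^ (1 - κ) *
          ∫ τ in (0:ℝ)..t, (t - τ) ^ (α - 1) * τ ^ (κ - 1) *
          (exp (μ * t) * exp (-μ * (t - τ)) * exp (-μ * τ)) *
          (τ ^ (1 - κ) * ‖v₁ τ - v₂ τ‖)) :=
        (mul_le_mul_of_nonneg_left (hineq t ht)
          (mul_nonneg (exp_pos _).le (rpow_nonneg ht.1 _))).trans_eq (by ring)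
    _ ≤ a * ((∫ s in (0:ℝ)..T, exp (-μ * q * s)) ^ (1 / q) *
          betaFn (p * (α - 1) + 1) (p * (κ - 1) + 1) ^ (1 / p) * T ^ (α - 1 + 1 / p) * M) :=
        mul_le_mul_of_nonneg_left (weighted_integral_kernel_mul_le_of_mem_Icc hpq' hx hy ht hM0
          fun τ hτ => (mul_assoc _ _ _).symm.trans_le (hM τ ⟨hτ.1.le, hτ.2.trans ht.2⟩)) ha
    _ = _ := by rw [hexponent]; ring

/-- The key weighted estimate for the contraction argument in `F^{α-γ,γ}`:
if `‖u₁(t)-u₂(t)‖ ≤ a ∫₀ᵗ (t-τ)^{α-1} τ^{κ-1} e^{μt}e^{-μ(t-τ)}e^{-μτ}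
(τ^{1-κ}‖v₁(τ)-v₂(τ)‖) dτ`, then with `p = 1+ε`, `1/p + 1/q = 1`,
`B_μ = (∫₀ᵀ e^{-μqτ}dτ)^{1/q}`,
`sup_t e^{-μt} t^{1-κ} ‖u₁(t)-u₂(t)‖ ≤
 a B_μ B(p(α-1)+1, p(κ-1)+1)^{1/p} T^{α-ε/(1+ε)} |‖v₁-v₂‖|_μ`;
moreover `B_μ → 0` as `μ → ∞`. -/
theorem weighted_contraction_estimate {X : Type*} [NormedAddCommGroup X]
    [NormedSpace ℝ X]
    (α γ T a b L μ ε p q : ℝ)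
    (hα : 0 < α) (hα1 : α < 1) (hγ : 0 < γ) (hγα : γ < α / 2)
    (hT : 0 < T) (ha : 0 ≤ a) (hb : 0 ≤ b) (hL : 0 ≤ L) (hμ : 0 < μ)
    (hε : 0 < ε) (hp : p = 1 + ε)
    (hεα : (1 + ε) * α - ε > 0) (hεκ : (1 + ε) * (α - γ) - ε > 0)
    (hpq : 1 / p + 1 / q = 1)
    (u₁ u₂ v₁ v₂ : ℝ → X)
    (hvbdd : BddAbove (Set.range fun t : Set.Icc (0:ℝ) T =>
      Real.exp (-μ * (t : ℝ)) * (t : ℝ) ^ (1 - (α - γ)) * ‖v₁ (t : ℝ) - v₂ (t : ℝ)‖))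
    (hineq : ∀ t ∈ Set.Icc (0:ℝ) T,
      ‖u₁ t - u₂ t‖ ≤ a * ∫ τ in (0:ℝ)..t,
        (t - τ) ^ (α - 1) * τ ^ ((α - γ) - 1) *
          (Real.exp (μ * t) * Real.exp (-μ * (t - τ)) * Real.exp (-μ * τ)) *
          (τ ^ (1 - (α - γ)) * ‖v₁ τ - v₂ τ‖)) :
    (∀ t ∈ Set.Icc (0:ℝ) T,
      Real.exp (-μ * t) * t ^ (1 - (α - γ)) * ‖u₁ t - u₂ t‖ ≤
        a * (∫ τ in (0:ℝ)..T, Real.exp (-μ * q * τ)) ^ (1 / q) *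
          (betaFn (p * (α - 1) + 1) (p * ((α - γ) - 1) + 1)) ^ (1 / p) *
          T ^ (α - ε / (1 + ε)) *
          (⨆ t : Set.Icc (0:ℝ) T,
            Real.exp (-μ * (t : ℝ)) * (t : ℝ) ^ (1 - (α - γ)) *
              ‖v₁ (t : ℝ) - v₂ (t : ℝ)‖)) ∧
    Filter.Tendsto (fun μ' : ℝ => (∫ τ in (0:ℝ)..T, Real.exp (-μ' * q * τ)) ^ (1 / q))
      Filter.atTop (nhds 0) :=
  weighted_contraction_estimate_general α γ T a μ ε p q hT ha hε hp hεα hεκ hpq u₁ u₂ v₁ v₂ hvbdd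
    hineq
end
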